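/- arXiv:2510.04387 — 9 statements merged into one kernel-verified Lean document; each statement's English description precedes it below -/
import Mathlib

section
/- Let n ≥ 1 be an integer with n not divisible by 4, and write n = P * Q^2 with P squarefree. Then the number of integers k with 1 ≤ k ≤ 2*floor(n/4) - 1 such that n divides k^2 equals (Q-1)/2. -/
theorem count_div_sq_not_four_dvd (n P Q : ℕ) (hn : 1 ≤ n) (h4 : ¬ (4 ∣ n))
    (hP : Squarefree P) (hPQ : n = P * Q ^ 2) :
    ((Finset.Icc 1 (2 * (n / 4) - 1)).filter (fun k => n ∣ k ^ 2)).card = (Q - 1) / 2 := by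
  have hP0 : P ≠ 0 := hP.ne_zero
  have hQ0 : Q ≠ 0 := by rintro rfl; rw [hPQ] at hn; simp at hn
  have hQodd : Q % 2 = 1 := by
    rcases Nat.even_or_odd Q with h | h
    · obtain ⟨m, rfl⟩ := h
      exact absurd ⟨P * m ^ 2, by rw [hPQ]; ring⟩ h4
    · exact Nat.odd_iff.mp h
  have key : ∀ k, n ∣ k ^ 2 ↔ P * Q ∣ k := by
    intro k
    rcases eq_or_ne k 0 with rfl | hk
    · simp
    constructor
    · intro h
      rw [hPQ] at h
      have hle := (Nat.factorization_le_iff_dvd (by positivity) (by positivity)).2 h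
      rw [← Nat.factorization_le_iff_dvd (by positivity) hk, Finsupp.le_def]
      intro p
      have h1 : (P * Q ^ 2).factorization p ≤ (k ^ 2).factorization p := hle p
      have h2 := hP.natFactorization_le_one p
      rw [Nat.factorization_mul hP0 (by positivity), Nat.factorization_pow] at h1
      rw [Nat.factorization_mul hP0 hQ0]
      simp only [Nat.factorization_pow, Finsupp.coe_add, Finsupp.coe_smul, Pi.add_apply,
        Pi.smul_apply, smul_eq_mul] at h1 ⊢
      omega
    · rintro ⟨m, rfl⟩
      exact ⟨P * m ^ 2, by rw [hPQ]; ring⟩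
  have hfc : ((Finset.Icc 1 (2 * (n / 4) - 1)).filter (fun k => n ∣ k ^ 2)) =
      ((Finset.Icc 1 (2 * (n / 4) - 1)).filter (fun k => P * Q ∣ k)) :=
    Finset.filter_congr (fun k _ => key k)
  rw [hfc]
  have hIcc : Finset.Icc 1 (2 * (n / 4) - 1) = Finset.Ioc 0 (2 * (n / 4) - 1) := by
    rw [← Finset.Icc_add_one_left_eq_Ioc, zero_add]
  rw [hIcc, Nat.Ioc_filter_dvd_card_eq_div]
  -- arithmetic
  obtain ⟨t, rfl⟩ : ∃ t, Q = 2 * t + 1 := ⟨Q / 2, by omega⟩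
  have hP4 : ¬ (4 ∣ P) := fun ⟨c, hc⟩ => h4 ⟨c * (2 * t + 1) ^ 2, by rw [hPQ, hc]; ring⟩
  have hn4 : n = 4 * (P * (t * t + t)) + P := by rw [hPQ]; ring
  have hgoal : (2 * (n / 4) - 1) / (P * (2 * t + 1)) = t := by
    refine Nat.div_eq_of_lt_le ?_ ?_
    · obtain ⟨L, hL⟩ : ∃ L, t * (P * (2 * t + 1)) = L := ⟨_, rfl⟩
      rw [hL]
      have e1 : L + P * t = 2 * (P * (t * t + t)) := by rw [← hL]; ring
      have hA0 : t = 0 → P * (t * t + t) = 0 ∧ P * t = 0 := by rintro rfl; simp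
      have ht1 : 1 ≤ t → 1 ≤ P * t := fun h => Nat.mul_pos (by omega) h
      have h4P : P % 4 ≠ 0 := fun h => hP4 (Nat.dvd_of_mod_eq_zero h)
      omega
    · obtain ⟨U, hU⟩ : ∃ U, (t + 1) * (P * (2 * t + 1)) = U := ⟨_, rfl⟩
      rw [hU]
      have e2 : U = 2 * (P * (t * t + t)) + P * t + P := by rw [← hU]; ring
      have h4P : P % 4 ≠ 0 := fun h => hP4 (Nat.dvd_of_mod_eq_zero h)
      omega
  rw [hgoal]
  omega
end

section
/- Let n = 4*P*Q^2 where P is a squarefree positive integer. Then the number of integers k with 1 ≤ k ≤ 2*floor(n/4) - 1 such that n divides k^2 equals Q - 1. -/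
theorem count_div_sq_four_dvd (n P Q : ℕ) (hP : Squarefree P) (hP1 : 1 ≤ P)
    (hPQ : n = 4 * P * Q ^ 2) :
    ((Finset.Icc 1 (2 * (n / 4) - 1)).filter (fun k => n ∣ k ^ 2)).card = Q - 1 := by
  rcases Nat.eq_zero_or_pos Q with hQ | hQ
  · subst hQ hPQ; simp
  have hkey : ∀ k : ℕ, n ∣ k ^ 2 ↔ 2 * P * Q ∣ k := by
    intro k
    constructor
    · intro h
      have h2Q : (2 * Q) ∣ k := by
        rw [← Nat.pow_dvd_pow_iff (n := 2) two_ne_zero]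
        calc (2 * Q) ^ 2 ∣ 4 * P * Q ^ 2 := by
              have : (2 * Q) ^ 2 = 4 * Q ^ 2 := by ring
              rw [this]
              exact ⟨P, by ring⟩
          _ ∣ k ^ 2 := hPQ ▸ h
      obtain ⟨m, hm⟩ := h2Q
      have hPm : P ∣ m := by
        rw [← hP.dvd_pow_iff_dvd (n := 2) two_ne_zero]
        have h4 : 4 * Q ^ 2 * P ∣ 4 * Q ^ 2 * m ^ 2 := by
          have : 4 * Q ^ 2 * m ^ 2 = k ^ 2 := by rw [hm]; ring
          rw [this]
          have : 4 * Q ^ 2 * P = n := by rw [hPQ]; ring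
          rw [this]; exact h
        exact (mul_dvd_mul_iff_left (by positivity : (4 * Q ^ 2 : ℕ) ≠ 0)).mp h4
      obtain ⟨t, ht⟩ := hPm
      exact ⟨t, by rw [hm, ht]; ring⟩
    · rintro ⟨t, rfl⟩
      exact ⟨P * t ^ 2, by rw [hPQ]; ring⟩
  have hn4 : n / 4 = P * Q ^ 2 := by rw [hPQ, mul_assoc, Nat.mul_div_cancel_left _ (by norm_num)]
  rw [hn4]
  have : ((Finset.Icc 1 (2 * (P * Q ^ 2) - 1)).filter (fun k => n ∣ k ^ 2)).card
      = ((Finset.Ioc 0 (2 * (P * Q ^ 2) - 1)).filter (fun k => 2 * P * Q ∣ k)).card := by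
    congr 1
    rw [show Finset.Icc 1 (2 * (P * Q ^ 2) - 1) = Finset.Ioc 0 (2 * (P * Q ^ 2) - 1) by rfl]
    exact Finset.filter_congr (fun k _ => by simp [hkey k])
  rw [this, Nat.Ioc_filter_dvd_card_eq_div]
  have hd : 0 < 2 * P * Q := by positivity
  have e1 : (Q - 1) * (2 * P * Q) + 2 * P * Q = 2 * (P * Q ^ 2) := by
    have hs : Q - 1 + 1 = Q := Nat.succ_pred_eq_of_pos hQ
    calc (Q - 1) * (2 * P * Q) + 2 * P * Q = (Q - 1 + 1) * (2 * P * Q) := by ring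
      _ = Q * (2 * P * Q) := by rw [hs]
      _ = 2 * (P * Q ^ 2) := by ring
  apply Nat.div_eq_of_lt_le
  · omega
  · have e2 : (Q - 1 + 1) * (2 * P * Q) = 2 * (P * Q ^ 2) := by
      rw [Nat.sub_add_cancel hQ]; ring
    omega
end

section
/- For any odd prime p, the sum over k from 1 to (p-1)/2 of (k^2 mod p) equals p*(p-1)/4 + (1/2) * sum over j from 1 to p-1 of j * legendreSym p j. -/
open Finset

theorem sum_rem_sq_legendre (p : ℕ) [Fact p.Prime] (hp : p ≠ 2) :
    (∑ k ∈ Finset.Icc 1 ((p - 1) / 2), ((k ^ 2 % p : ℕ) : ℚ)) =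
      (p : ℚ) * (p - 1) / 4
        + (1 / 2) * ∑ j ∈ Finset.Icc 1 (p - 1), (j : ℚ) * ((legendreSym p j : ℤ) : ℚ) := by
  have hp' := Fact.out (p := p.Prime)
  have hp2 : 2 < p := lt_of_le_of_ne hp'.two_le (Ne.symm hp)
  have hodd : p % 2 = 1 := Nat.odd_iff.mp (hp'.odd_of_ne_two hp)
  have hhalf : 2 * ((p - 1) / 2) = p - 1 := by omega
  set T := Finset.Icc 1 (p - 1) with hT
  set A := T.filter (fun j : ℕ => legendreSym p (j : ℤ) = 1) with hAdef
  -- nonzero in ZMod p for j ∈ T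
  have hne : ∀ j ∈ T, ((j : ℤ) : ZMod p) ≠ 0 := by
    intro j hj
    simp only [hT, Finset.mem_Icc] at hj
    rw [Int.cast_natCast]
    rw [Ne, ZMod.natCast_eq_zero_iff]
    intro hdvd
    have := Nat.le_of_dvd (by omega) hdvd
    omega
  -- Step 1: LHS = ∑_{j ∈ A} j
  have hA : (∑ k ∈ Finset.Icc 1 ((p - 1) / 2), ((k ^ 2 % p : ℕ) : ℚ))
      = ∑ j ∈ A, (j : ℚ) := by
    have himg : (Finset.Icc 1 ((p - 1) / 2)).image (fun k => k ^ 2 % p) = A := by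
      apply Finset.Subset.antisymm
      · intro j hj
        simp only [Finset.mem_image, Finset.mem_Icc] at hj
        obtain ⟨k, ⟨hk1, hk2⟩, rfl⟩ := hj
        have hkp : k < p := by omega
        have hknz : ((k : ℤ) : ZMod p) ≠ 0 := by
          rw [Int.cast_natCast, Ne, ZMod.natCast_eq_zero_iff]
          intro hdvd; have := Nat.le_of_dvd (by omega) hdvd; omega
        have hleg : legendreSym p ((k ^ 2 % p : ℕ) : ℤ) = 1 := by
          have h1 : ((k ^ 2 % p : ℕ) : ℤ) = ((k : ℤ) ^ 2) % p := by push_cast; ring_nf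
          rw [h1, ← legendreSym.mod]
          exact legendreSym.sq_one' p hknz
        have hne0 : k ^ 2 % p ≠ 0 := by
          intro h0
          have : ((k ^ 2 : ℕ) : ZMod p) = 0 := by
            rw [ZMod.natCast_eq_zero_iff]
            exact Nat.dvd_of_mod_eq_zero h0
          rw [Nat.cast_pow] at this
          have := pow_eq_zero_iff (n := 2) (by norm_num) |>.mp this
          exact hknz (by exact_mod_cast this)
        simp only [hAdef, Finset.mem_filter, hT, Finset.mem_Icc]
        refine ⟨⟨by omega, ?_⟩, hleg⟩
        have := Nat.mod_lt (k ^ 2) (show 0 < p by omega)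
        omega
      · intro j hj
        simp only [hAdef, Finset.mem_filter, hT, Finset.mem_Icc] at hj
        obtain ⟨⟨hj1, hj2⟩, hleg⟩ := hj
        have hjnz : ((j : ℤ) : ZMod p) ≠ 0 := by
          rw [Int.cast_natCast, Ne, ZMod.natCast_eq_zero_iff]
          intro hdvd; have := Nat.le_of_dvd (by omega) hdvd; omega
        have hsq : IsSquare (((j : ℤ) : ZMod p)) := (legendreSym.eq_one_iff p hjnz).mp hleg
        obtain ⟨y, hy⟩ := hsq
        have hynz : y ≠ 0 := by
          intro h0; rw [h0, mul_zero] at hy; exact hjnz hy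
        set v := y.val with hv
        have hvlt : v < p := y.val_lt
        have hv0 : 0 < v := by
          rcases Nat.eq_zero_or_pos v with h | h
          swap
          · exact h
          · exfalso; apply hynz
            have : (v : ZMod p) = y := by rw [hv, ZMod.natCast_val, ZMod.cast_id]
            rw [← this, h]; simp
        have key : ∀ k : ℕ, k < p → ((k : ZMod p) = y ∨ (k : ZMod p) = -y) → k ^ 2 % p = j := by
          intro k hkp hk
          have hsq2 : ((k ^ 2 : ℕ) : ZMod p) = ((j : ℕ) : ZMod p) := by
            push_cast
            push_cast at hy
            rcases hk with h | h <;> rw [h] <;> rw [hy] <;> ring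
          have h2 := (ZMod.natCast_eq_natCast_iff' _ _ _).mp hsq2
          rw [show j % p = j from Nat.mod_eq_of_lt (by omega)] at h2
          exact h2
        simp only [Finset.mem_image, Finset.mem_Icc]
        by_cases hle : v ≤ (p - 1) / 2
        · refine ⟨v, ⟨hv0, hle⟩, key v hvlt (Or.inl ?_)⟩
          rw [hv, ZMod.natCast_val, ZMod.cast_id]
        · refine ⟨p - v, ⟨by omega, by omega⟩, key (p - v) (by omega) (Or.inr ?_)⟩
          have : ((p - v : ℕ) : ZMod p) = (p : ZMod p) - (v : ZMod p) := by
            rw [Nat.cast_sub (by omega)]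
          rw [this, ZMod.natCast_self, zero_sub, hv, ZMod.natCast_val, ZMod.cast_id]
    rw [← himg]
    rw [Finset.sum_image ?hinj]
    case hinj =>
      intro k hk l hl hkl
      simp only [Finset.mem_coe, Finset.mem_Icc] at hk hl
      have hsq2 : ((k : ZMod p))^2 = ((l : ZMod p))^2 := by
        have : ((k ^ 2 % p : ℕ) : ZMod p) = ((l ^ 2 % p : ℕ) : ZMod p) := by rw [show k ^ 2 % p = l ^ 2 % p from hkl]
        simpa [ZMod.natCast_mod] using this
      have := sq_eq_sq_iff_eq_or_eq_neg.mp hsq2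
      rcases this with h | h
      · have := (ZMod.natCast_eq_natCast_iff' _ _ _).mp h
        rwa [Nat.mod_eq_of_lt (by omega), Nat.mod_eq_of_lt (by omega)] at this
      · exfalso
        have : ((k + l : ℕ) : ZMod p) = 0 := by push_cast [h]; ring
        rw [ZMod.natCast_eq_zero_iff] at this
        have := Nat.le_of_dvd (by omega) this
        omega
  rw [hA]
  -- Step 2: algebra
  have hTsum : ∑ j ∈ T, (j : ℚ) = (p : ℚ) * ((p : ℚ) - 1) / 2 := by
    have h1 : ∑ j ∈ T, j = ∑ j ∈ Finset.range p, j := by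
      have he : T = Finset.Ico 1 p := by
        rw [hT]; ext x; simp [Finset.mem_Icc, Finset.mem_Ico]; omega
      rw [he, Finset.range_eq_Ico, Finset.sum_eq_sum_Ico_succ_bot (by omega : 0 < p)]
      simp
    have h2 := Finset.sum_range_id_mul_two p
    have h3 : (∑ j ∈ T, j) * 2 = p * (p - 1) := by rw [h1]; exact h2
    have h4 : ((∑ j ∈ T, j : ℕ) : ℚ) * 2 = (p : ℚ) * ((p : ℚ) - 1) := by
      have := congrArg (fun n : ℕ => (n : ℚ)) h3
      push_cast at this
      rw [Nat.cast_sub (by omega)] at this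
      push_cast at this
      convert this using 2
      · push_cast; ring
    push_cast at h4 ⊢
    linarith
  have hsplit : ∑ j ∈ A, (j : ℚ)
      = ∑ j ∈ T, ((j : ℚ) / 2 + (j : ℚ) * ((legendreSym p (j : ℤ) : ℤ) : ℚ) / 2) := by
    rw [hAdef, Finset.sum_filter]
    apply Finset.sum_congr rfl
    intro j hj
    rcases legendreSym.eq_one_or_neg_one p (hne j hj) with h | h
    · simp only [if_pos h, h]
      push_cast
      ring
    · simp only [if_neg (show ¬ legendreSym p (j:ℤ) = 1 by rw [h]; norm_num), h]
      push_cast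
      ring
  rw [hsplit, Finset.sum_add_distrib]
  have : ∑ j ∈ T, (j : ℚ) / 2 = (∑ j ∈ T, (j : ℚ)) / 2 := by
    rw [Finset.sum_div]
  rw [this, hTsum]
  have : ∑ j ∈ T, (j : ℚ) * ((legendreSym p (j : ℤ) : ℤ) : ℚ) / 2
      = (∑ j ∈ T, (j : ℚ) * ((legendreSym p (j : ℤ) : ℤ) : ℚ)) / 2 := by
    rw [Finset.sum_div]
  rw [this]
  ring
end

section
/- For any prime p with p ≡ 1 (mod 4), the sum over k from 1 to (p-1)/2 of (k^2 mod p) equals p*(p-1)/4. -/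
lemma aux_min_rep (p : ℕ) [NeZero p] (hodd : p % 2 = 1) (x : ZMod p) (hx : x ≠ 0) :
    1 ≤ min x.val (p - x.val) ∧ min x.val (p - x.val) ≤ (p - 1) / 2 ∧
      (((min x.val (p - x.val) : ℕ) : ZMod p) = x ∨
        ((min x.val (p - x.val) : ℕ) : ZMod p) = -x) := by
  have hv : x.val < p := ZMod.val_lt x
  have hv0 : x.val ≠ 0 := fun h => hx ((ZMod.val_eq_zero x).1 h)
  rcases min_cases x.val (p - x.val) with ⟨h, hle⟩ | ⟨h, hle⟩ <;> rw [h]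
  · refine ⟨by omega, by omega, Or.inl ?_⟩
    simp [ZMod.natCast_val, ZMod.cast_id]
  · refine ⟨by omega, by omega, Or.inr ?_⟩
    have : ((p - x.val : ℕ) : ZMod p) = (p : ZMod p) - (x.val : ℕ) := by
      rw [Nat.cast_sub hv.le]
    rw [this, ZMod.natCast_self, zero_sub]
    simp [ZMod.natCast_val, ZMod.cast_id]

theorem sum_rem_sq_one_mod_four (p : ℕ) (hp : p.Prime) (h1 : p % 4 = 1) :
    ∑ k ∈ Finset.Icc 1 ((p - 1) / 2), k ^ 2 % p = p * (p - 1) / 4 := by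
  haveI : Fact p.Prime := ⟨hp⟩
  have hp5 : 5 ≤ p := by
    rcases hp.two_le.lt_or_eq with h | h
    · rcases Nat.lt_or_ge p 5 with h' | h'
      · interval_cases p <;> omega
      · exact h'
    · omega
  have hodd : p % 2 = 1 := by omega
  obtain ⟨i, hi⟩ : ∃ i : ZMod p, i ^ 2 = -1 := by
    obtain ⟨r, hr⟩ := (ZMod.exists_sq_eq_neg_one_iff (p := p)).2 (by omega)
    exact ⟨r, by rw [sq]; exact hr.symm⟩
  have hi0 : i ≠ 0 := by
    intro h
    rw [h] at hi
    have : (0 : ZMod p) ^ 2 = 0 := by ring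
    rw [this] at hi
    exact one_ne_zero (neg_eq_zero.mp hi.symm)
  set s : Finset ℕ := Finset.Icc 1 ((p - 1) / 2) with hs
  set g : ℕ → ℕ := fun k => min (i * (k : ZMod p)).val (p - (i * (k : ZMod p)).val) with hg
  -- basic facts about k ∈ s
  have hkcast : ∀ k ∈ s, (k : ZMod p) ≠ 0 := by
    intro k hk
    simp only [hs, Finset.mem_Icc] at hk
    rw [Ne, ZMod.natCast_eq_zero_iff]
    intro hdvd
    have := Nat.le_of_dvd (by omega) hdvd
    omega
  have hik : ∀ k ∈ s, (i * (k : ZMod p)) ≠ 0 := fun k hk =>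
    mul_ne_zero hi0 (hkcast k hk)
  have hgmem : ∀ k ∈ s, g k ∈ s := by
    intro k hk
    obtain ⟨h1', h2', _⟩ := aux_min_rep p hodd _ (hik k hk)
    simp only [hs, Finset.mem_Icc]; exact ⟨h1', h2'⟩
  have hgcast : ∀ k ∈ s, ((g k : ℕ) : ZMod p) = i * k ∨ ((g k : ℕ) : ZMod p) = -(i * k) := by
    intro k hk
    exact (aux_min_rep p hodd _ (hik k hk)).2.2
  have hgsq : ∀ k ∈ s, ((g k : ℕ) : ZMod p) ^ 2 = -((k : ZMod p) ^ 2) := by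
    intro k hk
    have base : (i * (k : ZMod p)) ^ 2 = -((k : ZMod p) ^ 2) := by
      rw [mul_pow, hi]; ring
    rcases hgcast k hk with h | h <;> rw [h]
    · exact base
    · rw [neg_sq]; exact base
  have hginv : ∀ k ∈ s, g (g k) = k := by
    intro k hk
    simp only [hs, Finset.mem_Icc] at hk
    have hkp : k < p := by omega
    have hvk : ((k : ℕ) : ZMod p).val = k := by
      rw [ZMod.val_natCast, Nat.mod_eq_of_lt hkp]
    have hcases := hgcast k (by simp only [hs, Finset.mem_Icc]; exact hk)
    have hval : (i * ((g k : ℕ) : ZMod p)).val = k ∨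
        (i * ((g k : ℕ) : ZMod p)).val = p - k := by
      rcases hcases with h | h <;> rw [h]
      · have hii : i * i = -1 := by rw [← sq, hi]
        have : i * (i * (k : ZMod p)) = -(k : ZMod p) := by
          calc i * (i * (k : ZMod p)) = (i * i) * k := by ring
          _ = -(k : ZMod p) := by rw [hii]; ring
        rw [this, ZMod.neg_val]
        have : ((k : ℕ) : ZMod p) ≠ 0 := hkcast k (by simp only [hs, Finset.mem_Icc]; exact hk)
        rw [if_neg this, hvk]
        right; rfl
      · have hii : i * i = -1 := by rw [← sq, hi]
        have : i * (-(i * (k : ZMod p))) = (k : ZMod p) := by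
          calc i * (-(i * (k : ZMod p))) = -((i * i) * k) := by ring
          _ = (k : ZMod p) := by rw [hii]; ring
        rw [this, hvk]; left; rfl
    show min _ _ = k
    rcases hval with h | h <;> rw [h] <;> omega
  have hpair : ∀ k ∈ s, k ^ 2 % p + (g k) ^ 2 % p = p := by
    intro k hk
    have e1 : k ^ 2 % p = ((k : ZMod p) ^ 2).val := by
      rw [← ZMod.val_natCast]; push_cast; ring_nf
    have e2 : (g k) ^ 2 % p = (((g k : ℕ) : ZMod p) ^ 2).val := by
      rw [← ZMod.val_natCast]; push_cast; ring_nf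
    have hk2 : ((k : ZMod p)) ^ 2 ≠ 0 := pow_ne_zero _ (hkcast k hk)
    rw [e1, e2, hgsq k hk, ZMod.neg_val, if_neg hk2]
    have := ZMod.val_lt ((k : ZMod p) ^ 2)
    have hne : ((k : ZMod p) ^ 2).val ≠ 0 := fun h => hk2 ((ZMod.val_eq_zero _).1 h)
    omega
  -- the reindexed sum equals the original sum
  have hre : ∑ k ∈ s, (g k) ^ 2 % p = ∑ k ∈ s, k ^ 2 % p := by
    refine Finset.sum_nbij' g g hgmem hgmem hginv hginv ?_
    intro k _; rfl
  have hdouble : 2 * (∑ k ∈ s, k ^ 2 % p) = p * ((p - 1) / 2) := by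
    have : ∑ k ∈ s, (k ^ 2 % p + (g k) ^ 2 % p) = ∑ k ∈ s, p :=
      Finset.sum_congr rfl hpair
    rw [Finset.sum_add_distrib, hre] at this
    have hcard : s.card = (p - 1) / 2 := by
      simp [hs, Nat.card_Icc]
    rw [Finset.sum_const, hcard, smul_eq_mul] at this
    rw [two_mul, mul_comm]; exact this
  set S := ∑ k ∈ s, k ^ 2 % p with hS
  obtain ⟨m, hm⟩ : ∃ m, p = 4 * m + 1 := ⟨(p - 1) / 4, by omega⟩
  have h2 : (p - 1) / 2 = 2 * m := by omega
  rw [h2] at hdouble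
  have h3 : p * (2 * m) = 2 * (p * m) := by ring
  rw [h3] at hdouble
  have h4 : S = p * m := Nat.eq_of_mul_eq_mul_left (by norm_num) hdouble
  have h5 : p * (p - 1) / 4 = p * m := by
    rw [show p - 1 = 4 * m by omega, show p * (4 * m) = 4 * (p * m) by ring,
      Nat.mul_div_cancel_left _ (by norm_num)]
  rw [h4, h5]
end

section
/- For any prime p ≡ 1 (mod 4), the sum over j from 1 to floor(p/4) of floor(sqrt(j*p)) equals (p^2 - 1)/12. -/
private lemma six_sum_sq (M : ℕ) :
    6 * ∑ y ∈ Finset.Icc 1 M, y ^ 2 = M * (M + 1) * (2 * M + 1) := by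
  induction M with
  | zero => simp
  | succ n ih =>
    rw [Finset.sum_Icc_succ_top (by omega), Nat.mul_add, ih]
    ring

private lemma sqrt_eq_card (n M : ℕ) (h : Nat.sqrt n ≤ M) :
    Nat.sqrt n = ((Finset.Icc 1 M).filter (fun y => y ^ 2 ≤ n)).card := by
  have key : (Finset.Icc 1 M).filter (fun y => y ^ 2 ≤ n) = Finset.Icc 1 (Nat.sqrt n) := by
    ext y
    simp only [Finset.mem_filter, Finset.mem_Icc]
    have hy : y ^ 2 ≤ n ↔ y ≤ Nat.sqrt n := by
      rw [pow_two]
      exact (Nat.le_sqrt).symm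
    constructor
    · rintro ⟨⟨ha, hb⟩, hc⟩
      exact ⟨ha, hy.mp hc⟩
    · rintro ⟨ha, hb⟩
      exact ⟨⟨ha, le_trans hb h⟩, hy.mpr hb⟩
  rw [key, Nat.card_Icc]
  omega

private lemma card_j (p q y : ℕ) (hp : 0 < p) (hnd : ¬ p ∣ y ^ 2) :
    ((Finset.Icc 1 q).filter (fun j => y ^ 2 ≤ j * p)).card = q - y ^ 2 / p := by
  have key : (Finset.Icc 1 q).filter (fun j => y ^ 2 ≤ j * p)
      = Finset.Icc (y ^ 2 / p + 1) q := by
    ext j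
    simp only [Finset.mem_filter, Finset.mem_Icc]
    constructor
    · rintro ⟨⟨ha, hb⟩, hc⟩
      refine ⟨?_, hb⟩
      have hle : y ^ 2 / p ≤ j := by
        calc y ^ 2 / p ≤ j * p / p := Nat.div_le_div_right hc
        _ = j := Nat.mul_div_cancel j hp
      rcases Nat.lt_or_ge (y ^ 2 / p) j with h | h
      · exact h
      · exfalso
        have heq : y ^ 2 / p = j := le_antisymm hle h
        have h4 : j * p ≤ y ^ 2 := by
          rw [← heq]; exact Nat.div_mul_le_self _ _
        exact hnd ⟨j, (le_antisymm hc h4).trans (mul_comm j p)⟩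
    · rintro ⟨ha, hb⟩
      refine ⟨⟨le_trans (Nat.le_add_left 1 (y ^ 2 / p)) ha, hb⟩, ?_⟩
      have h3 : y ^ 2 < (y ^ 2 / p + 1) * p := by
        have h5 := Nat.div_add_mod (y ^ 2) p
        have h6 := Nat.mod_lt (y ^ 2) hp
        nlinarith
      have h4 : (y ^ 2 / p + 1) * p ≤ j * p := Nat.mul_le_mul_right p ha
      exact le_of_lt (lt_of_lt_of_le h3 h4)
  rw [key, Nat.card_Icc]
  exact Nat.succ_sub_succ q (y ^ 2 / p)

private lemma sum_res (p q : ℕ) (hp : p.Prime) (hpq : p = 4 * q + 1) (hq1 : 1 ≤ q) :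
    2 * ∑ y ∈ Finset.Icc 1 (2 * q), y ^ 2 % p = 2 * q * p := by
  haveI : Fact p.Prime := ⟨hp⟩
  obtain ⟨u, hu⟩ : IsSquare (-1 : ZMod p) := by
    rw [ZMod.exists_sq_eq_neg_one_iff]
    omega
  -- hu : -1 = u * u
  set M := 2 * q with hM
  have hMp : p = 2 * M + 1 := by omega
  have hu0 : u ≠ 0 := by
    intro h
    rw [h, mul_zero] at hu
    exact (one_ne_zero : (1 : ZMod p) ≠ 0) (by linear_combination -hu)
  have hyne : ∀ y : ℕ, 1 ≤ y → y ≤ M → ((y : ZMod p) ≠ 0) := by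
    intro y ha hb h
    rw [ZMod.natCast_eq_zero_iff] at h
    have := Nat.le_of_dvd (by omega) h
    omega
  set nm : ZMod p → ℕ := fun c => if c.val ≤ M then c.val else p - c.val with hnm
  have hval_lt : ∀ c : ZMod p, c.val < p := fun c => ZMod.val_lt c
  have hval0 : ∀ c : ZMod p, c ≠ 0 → c.val ≠ 0 := by
    intro c hc h
    exact hc (by rw [← ZMod.natCast_zmod_val c, h]; simp)
  have hnm_mem : ∀ c : ZMod p, c ≠ 0 → 1 ≤ nm c ∧ nm c ≤ M := by
    intro c hc
    have h0 := hval0 c hc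
    have := hval_lt c
    simp only [hnm]
    split <;> omega
  have hnm_cast : ∀ c : ZMod p, ((nm c : ℕ) : ZMod p) = c ∨ ((nm c : ℕ) : ZMod p) = -c := by
    intro c
    simp only [hnm]
    split
    · left; exact ZMod.natCast_zmod_val c
    · right
      have hlt := hval_lt c
      have hcast : ((p - c.val : ℕ) : ZMod p) = (p : ZMod p) - (c.val : ZMod p) := by
        push_cast [Nat.cast_sub hlt.le]
        ring
      rw [hcast, ZMod.natCast_self, ZMod.natCast_zmod_val]
      ring
  have hnm_neg : ∀ c : ZMod p, c ≠ 0 → nm (-c) = nm c := by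
    intro c hc
    have h0 := hval0 c hc
    have hneg : (-c).val = p - c.val := by
      rw [ZMod.neg_val, if_neg hc]
    have := hval_lt c
    simp only [hnm, hneg]
    split <;> split <;> omega
  have hnm_self : ∀ y : ℕ, 1 ≤ y → y ≤ M → nm ((y : ZMod p)) = y := by
    intro y ha hb
    have hvy : ((y : ℕ) : ZMod p).val = y := ZMod.val_cast_of_lt (by omega)
    simp only [hnm, hvy]
    rw [if_pos hb]
  set g : ℕ → ℕ := fun y => nm (u * (y : ZMod p)) with hg
  have hne : ∀ y : ℕ, 1 ≤ y → y ≤ M → u * (y : ZMod p) ≠ 0 :=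
    fun y ha hb => mul_ne_zero hu0 (hyne y ha hb)
  have hg_mem : ∀ y ∈ Finset.Icc 1 M, g y ∈ Finset.Icc 1 M := by
    intro y hy
    rw [Finset.mem_Icc] at hy ⊢
    exact hnm_mem _ (hne y hy.1 hy.2)
  have hg_inv : ∀ y ∈ Finset.Icc 1 M, g (g y) = y := by
    intro y hy
    rw [Finset.mem_Icc] at hy
    rcases hnm_cast (u * (y : ZMod p)) with h | h
    · have hc : u * ((g y : ℕ) : ZMod p) = -(y : ZMod p) := by
        simp only [hg]
        rw [h]
        linear_combination -(y : ZMod p) * hu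
      simp only [hg]
      rw [hc, hnm_neg _ (hyne y hy.1 hy.2), hnm_self y hy.1 hy.2]
    · have hc : u * ((g y : ℕ) : ZMod p) = (y : ZMod p) := by
        simp only [hg]
        rw [h]
        linear_combination (y : ZMod p) * hu
      simp only [hg]
      rw [hc, hnm_self y hy.1 hy.2]
  have hg_sq : ∀ y : ℕ, 1 ≤ y → y ≤ M →
      (((g y : ℕ) : ZMod p)) ^ 2 = -((y : ZMod p)) ^ 2 := by
    intro y ha hb
    rcases hnm_cast (u * (y : ZMod p)) with h | h <;>
      · simp only [hg]
        rw [h]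
        linear_combination -(y : ZMod p) ^ 2 * hu
  have hpair : ∀ y ∈ Finset.Icc 1 M, y ^ 2 % p + (g y) ^ 2 % p = p := by
    intro y hy
    rw [Finset.mem_Icc] at hy
    have hfy : y ^ 2 % p = ((y : ZMod p) ^ 2).val := by
      rw [← ZMod.val_natCast]
      push_cast
      ring_nf
    have hfgy : (g y) ^ 2 % p = ((-((y : ZMod p) ^ 2))).val := by
      rw [← hg_sq y hy.1 hy.2, ← ZMod.val_natCast]
      push_cast
      ring_nf
    have hsqne : ((y : ZMod p)) ^ 2 ≠ 0 := pow_ne_zero _ (hyne y hy.1 hy.2)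
    have hnegval : (-((y : ZMod p) ^ 2)).val = p - ((y : ZMod p) ^ 2).val := by
      rw [ZMod.neg_val, if_neg hsqne]
    have hvlt := hval_lt ((y : ZMod p) ^ 2)
    have hv0 := hval0 _ hsqne
    rw [hfy, hfgy, hnegval]
    omega
  have hre : ∑ y ∈ Finset.Icc 1 M, y ^ 2 % p = ∑ y ∈ Finset.Icc 1 M, (g y) ^ 2 % p := by
    refine Finset.sum_nbij' g g hg_mem hg_mem hg_inv hg_inv ?_
    intro y hy
    rw [hg_inv y hy]
  have h2 : 2 * ∑ y ∈ Finset.Icc 1 M, y ^ 2 % p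
      = ∑ y ∈ Finset.Icc 1 M, (y ^ 2 % p + (g y) ^ 2 % p) := by
    rw [Finset.sum_add_distrib, ← hre]
    ring
  rw [h2, Finset.sum_congr rfl hpair, Finset.sum_const, Nat.card_Icc]
  simp only [hM, smul_eq_mul]
  rw [show 2 * q + 1 - 1 = 2 * q from by omega]

theorem bouniakowski (p : ℕ) (hp : p.Prime) (h1 : p % 4 = 1) :
    ∑ j ∈ Finset.Icc 1 (p / 4), ⌊Real.sqrt (j * p)⌋ = ((p : ℤ) ^ 2 - 1) / 12 := by
  have hq1 : 1 ≤ p / 4 := by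
    have := hp.two_le
    omega
  set q := p / 4 with hqdef
  have hpq : p = 4 * q + 1 := by omega
  have hp0 : 0 < p := by omega
  set M := 2 * q with hM
  -- Step 1: floor of real sqrt = Nat.sqrt
  have step1 : ∑ j ∈ Finset.Icc 1 q, ⌊Real.sqrt (j * p)⌋
      = ((∑ j ∈ Finset.Icc 1 q, Nat.sqrt (j * p) : ℕ) : ℤ) := by
    push_cast
    refine Finset.sum_congr rfl ?_
    intro j hj
    have hc : ((j : ℝ) * (p : ℝ)) = ((j * p : ℕ) : ℝ) := by push_cast; ring
    rw [hc, Real.floor_real_sqrt_eq_nat_sqrt]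
  -- abbreviations
  set S := ∑ j ∈ Finset.Icc 1 q, Nat.sqrt (j * p) with hS
  set D := ∑ y ∈ Finset.Icc 1 M, y ^ 2 / p with hD
  set R := ∑ y ∈ Finset.Icc 1 M, y ^ 2 % p with hR
  set S2 := ∑ y ∈ Finset.Icc 1 M, y ^ 2 with hS2
  have hnd : ∀ y : ℕ, 1 ≤ y → y ≤ M → ¬ p ∣ y ^ 2 := by
    intro y ha hb hdvd
    have hdy : p ∣ y := hp.dvd_of_dvd_pow hdvd
    have := Nat.le_of_dvd (by omega) hdy
    omega
  -- swap sums
  have hswap : S = ∑ y ∈ Finset.Icc 1 M, (q - y ^ 2 / p) := by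
    have e1 : ∀ j ∈ Finset.Icc 1 q,
        Nat.sqrt (j * p) = ∑ y ∈ Finset.Icc 1 M, (if y ^ 2 ≤ j * p then 1 else 0) := by
      intro j hj
      rw [Finset.mem_Icc] at hj
      have hle : Nat.sqrt (j * p) ≤ M := by
        have h7 : j * p ≤ q * p := Nat.mul_le_mul_right p hj.2
        have h8 : q * p = 4 * q ^ 2 + q := by rw [hpq]; ring
        have h9 : (M + 1) ^ 2 = 4 * q ^ 2 + 4 * q + 1 := by rw [hM]; ring
        have h10 : j * p < (M + 1) ^ 2 := by linarith
        have := Nat.sqrt_lt'.mpr h10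
        omega
      rw [sqrt_eq_card (j * p) M hle, Finset.card_filter]
    have e2 : ∀ y ∈ Finset.Icc 1 M,
        (∑ j ∈ Finset.Icc 1 q, if y ^ 2 ≤ j * p then 1 else 0) = q - y ^ 2 / p := by
      intro y hy
      rw [Finset.mem_Icc] at hy
      rw [← Finset.card_filter]
      exact card_j p q y hp0 (hnd y hy.1 hy.2)
    rw [hS, Finset.sum_congr rfl e1, Finset.sum_comm, Finset.sum_congr rfl e2]
  have hDy : ∀ y ∈ Finset.Icc 1 M, y ^ 2 / p ≤ q := by
    intro y hy
    rw [Finset.mem_Icc] at hy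
    have hyq : y ^ 2 ≤ q * p := by
      have h7 : y ^ 2 ≤ (2 * q) ^ 2 := Nat.pow_le_pow_left hy.2 2
      have h8 : q * p = 4 * q ^ 2 + q := by rw [hpq]; ring
      have h9 : (2 * q) ^ 2 = 4 * q ^ 2 := by ring
      linarith
    calc y ^ 2 / p ≤ q * p / p := Nat.div_le_div_right hyq
    _ = q := Nat.mul_div_cancel q hp0
  have hA : S + D = 2 * q ^ 2 := by
    rw [hswap, hD, ← Finset.sum_add_distrib]
    have e3 : ∀ y ∈ Finset.Icc 1 M, (q - y ^ 2 / p) + y ^ 2 / p = q :=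
      fun y hy => Nat.sub_add_cancel (hDy y hy)
    rw [Finset.sum_congr rfl e3, Finset.sum_const, Nat.card_Icc]
    simp only [hM, smul_eq_mul]
    rw [show 2 * q + 1 - 1 = 2 * q from by omega]
    ring
  have h2 : p * D + R = S2 := by
    rw [hD, hR, hS2, Finset.mul_sum, ← Finset.sum_add_distrib]
    refine Finset.sum_congr rfl ?_
    intro y hy
    exact Nat.div_add_mod (y ^ 2) p
  have h3 : 2 * R = 2 * q * p := sum_res p q hp hpq hq1
  have h4 : 6 * S2 = (4 * q ^ 2 + 2 * q) * p := by
    rw [hS2, six_sum_sq M, hM, hpq]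
    ring
  have e1 : p * (6 * D + 6 * q) + 6 * R = (4 * q ^ 2 + 2 * q) * p + 6 * (q * p) := by
    calc p * (6 * D + 6 * q) + 6 * R = 6 * (p * D + R) + 6 * (q * p) := by ring
    _ = 6 * S2 + 6 * (q * p) := by rw [h2]
    _ = (4 * q ^ 2 + 2 * q) * p + 6 * (q * p) := by rw [h4]
  have e2 : p * (4 * q ^ 2 + 2 * q) + 6 * R = (4 * q ^ 2 + 2 * q) * p + 6 * (q * p) := by
    calc p * (4 * q ^ 2 + 2 * q) + 6 * R = (4 * q ^ 2 + 2 * q) * p + 3 * (2 * R) := by ring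
    _ = (4 * q ^ 2 + 2 * q) * p + 3 * (2 * q * p) := by rw [h3]
    _ = _ := by ring
  have hB : 6 * D + 6 * q = 4 * q ^ 2 + 2 * q := by
    have h5 : p * (6 * D + 6 * q) = p * (4 * q ^ 2 + 2 * q) :=
      Nat.add_right_cancel (e1.trans e2.symm)
    exact Nat.eq_of_mul_eq_mul_left hp0 h5
  have key : 3 * S = 4 * q ^ 2 + 2 * q := by linarith
  -- conclude over ℤ
  rw [step1]
  have hfin : ((p : ℤ) ^ 2 - 1) = ((S : ℤ)) * 12 := by
    have hz : (3 : ℤ) * (S : ℤ) = 4 * (q : ℤ) ^ 2 + 2 * q := by exact_mod_cast key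
    have hpz : (p : ℤ) = 4 * (q : ℤ) + 1 := by exact_mod_cast hpq
    rw [hpz]
    linarith
  rw [hfin]
  rw [Int.mul_ediv_cancel _ (by norm_num)]
end

section
/- For any odd integer n ≥ 3, the sum over k from 1 to n-1 of (k^2 mod 2n) equals n*(n-1)/2 + 2 * (sum over k from 1 to (n-1)/2 of (k^2 mod n)). -/
lemma modA (n a : ℕ) (hn : 0 < n) :
    a % (2 * n) + (a + n) % (2 * n) = n + 2 * (a % n) := by
  have h2n : 0 < 2 * n := by omega
  have hs : a % (2 * n) < 2 * n := Nat.mod_lt _ h2n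
  have h1 : a % n = (a % (2 * n)) % n := (Nat.mod_mod_of_dvd a ⟨2, by ring⟩).symm
  have h2 : (a + n) % (2 * n) = (a % (2 * n) + n) % (2 * n) := by
    conv_lhs => rw [Nat.add_mod, Nat.mod_eq_of_lt (show n < 2 * n by omega)]
  set s := a % (2 * n) with hsdef
  rcases lt_or_ge s n with h | h
  · rw [h2, Nat.mod_eq_of_lt (by omega), h1, Nat.mod_eq_of_lt h]; omega
  · have e1 : (s + n) % (2 * n) = s - n := by
      rw [Nat.mod_eq_sub_mod (by omega)]
      have : s + n - 2 * n = s - n := by omega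
      rw [this, Nat.mod_eq_of_lt (by omega)]
    have e2 : s % n = s - n := by
      rw [Nat.mod_eq_sub_mod h, Nat.mod_eq_of_lt (by omega)]
    rw [h2, e1, h1, e2]; omega

theorem sum_rem_two_n (n : ℕ) (hn : 3 ≤ n) (hodd : Odd n) :
    ∑ k ∈ Finset.Icc 1 (n - 1), k ^ 2 % (2 * n) =
      n * (n - 1) / 2 + 2 * ∑ k ∈ Finset.Icc 1 ((n - 1) / 2), k ^ 2 % n := by
  obtain ⟨m, hm⟩ := hodd
  have hm1 : 1 ≤ m := by omega
  have hIcc : Finset.Icc 1 (n - 1) = Finset.Ioc 0 (2 * m) := by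
    ext x; simp only [Finset.mem_Icc, Finset.mem_Ioc]; omega
  have hIcc2 : Finset.Icc 1 ((n - 1) / 2) = Finset.Ioc 0 m := by
    ext x; simp only [Finset.mem_Icc, Finset.mem_Ioc]; omega
  rw [hIcc, hIcc2]
  have hsplit := Finset.sum_Ioc_consecutive (fun k => k ^ 2 % (2 * n))
    (show 0 ≤ m by omega) (show m ≤ 2 * m by omega)
  rw [← hsplit]
  have hre : ∑ k ∈ Finset.Ioc m (2 * m), k ^ 2 % (2 * n)
      = ∑ k ∈ Finset.Ioc 0 m, (n - k) ^ 2 % (2 * n) := by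
    apply Finset.sum_nbij' (i := fun k => n - k) (j := fun k => n - k)
    all_goals intro a ha; simp only [Finset.mem_Ioc] at *
    all_goals try omega
    all_goals (have h : n - (n - a) = a := by omega)
    all_goals rw [h]
  rw [hre, ← Finset.sum_add_distrib]
  have hpt : ∀ k ∈ Finset.Ioc 0 m,
      k ^ 2 % (2 * n) + (n - k) ^ 2 % (2 * n) = n + 2 * (k ^ 2 % n) := by
    intro k hk
    simp only [Finset.mem_Ioc] at hk
    have hdk : (n - k) + k = n := by omega
    obtain ⟨d, hd⟩ : ∃ d, n = d + k := ⟨n - k, by omega⟩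
    have hnk : n - k = d := by omega
    have e1 : (n - k) ^ 2 + 2 * n * k = n ^ 2 + k ^ 2 := by
      rw [hnk, hd]; ring
    have e2 : n ^ 2 + k ^ 2 = k ^ 2 + n + 2 * n * m := by
      subst hm; ring
    have e3 : (n - k) ^ 2 % (2 * n) = (k ^ 2 + n) % (2 * n) := by
      calc (n - k) ^ 2 % (2 * n) = ((n - k) ^ 2 + 2 * n * k) % (2 * n) :=
            (Nat.add_mul_mod_self_left _ _ _).symm
        _ = (k ^ 2 + n + 2 * n * m) % (2 * n) := by rw [e1, e2]
        _ = (k ^ 2 + n) % (2 * n) := Nat.add_mul_mod_self_left _ _ _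
    rw [e3]
    exact modA n (k ^ 2) (by omega)
  rw [Finset.sum_congr rfl hpt, Finset.sum_add_distrib, Finset.sum_const,
    Nat.card_Ioc, ← Finset.mul_sum]
  have hdiv : n * (n - 1) / 2 = m * n := by
    have h2 : n - 1 = 2 * m := by omega
    rw [h2, show n * (2 * m) = m * n * 2 by ring, Nat.mul_div_cancel _ (by omega)]
  rw [hdiv]
  simp [smul_eq_mul]
end

section
/- For every integer β ≥ 1, the sum over k from 1 to 2^(2β-1) of (k^2 mod 2^(2β)) equals 2^(2β-2) * (2^(2β) - 3*2^β + 3). -/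
private lemma emod_key (x n : ℤ) (hn : 0 < n) :
    (x + n) % (2*n) + x % (2*n) = 2 * (x % n) + n := by
  have h2n : (0:ℤ) < 2*n := by linarith
  set r := x % (2*n) with hr
  have hr0 : 0 ≤ r := Int.emod_nonneg x (by linarith)
  have hr1 : r < 2*n := Int.emod_lt_of_pos x h2n
  have hxn : x % n = r % n := (Int.emod_emod_of_dvd x ⟨2, by ring⟩).symm
  have hdm := Int.mul_ediv_add_emod x (2*n)
  have hadd : (x + n) % (2*n) = (r + n) % (2*n) := by
    conv_lhs => rw [show x + n = (r + n) + (2*n)*(x/(2*n)) by linarith]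
    rw [Int.add_mul_emod_self_left]
  rcases lt_or_ge r n with h | h
  · rw [hadd, Int.emod_eq_of_lt (by linarith) (by linarith), hxn,
      Int.emod_eq_of_lt hr0 h]
    ring
  · have h1 : (r + n) % (2*n) = r - n := by
      conv_lhs => rw [show r + n = (r - n) + (2*n)*1 by ring]
      rw [Int.add_mul_emod_self_left,
        Int.emod_eq_of_lt (by linarith) (by linarith)]
    have h2 : r % n = r - n := by
      conv_lhs => rw [show r = (r - n) + n*1 by ring]
      rw [Int.add_mul_emod_self_left,
        Int.emod_eq_of_lt (by linarith) (by linarith)]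
    rw [hadd, h1, hxn, h2]
    ring

private lemma sq_add_emod (N c k : ℤ) (h1 : N ∣ c^2) (h2 : N ∣ 2*c*k) :
    (c + k)^2 % N = k^2 % N := by
  have hd : N ∣ (c+k)^2 - k^2 := by
    have := dvd_add h1 h2
    have e : (c+k)^2 - k^2 = c^2 + 2*c*k := by ring
    rwa [e]
  have : k^2 ≡ (c+k)^2 [ZMOD N] := Int.modEq_iff_dvd.mpr hd
  exact this.symm

private lemma sq_sub_emod (N c k : ℤ) (h1 : N ∣ c^2) (h2 : N ∣ 2*c) :
    (c - k)^2 % N = k^2 % N := by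
  have h2' : N ∣ 2*c*(-k) := h2.mul_right (-k)
  have := sq_add_emod N c (-k) h1 h2'
  have e1 : (c + -k)^2 = (c - k)^2 := by ring
  have e2 : ((-k:ℤ))^2 = k^2 := by ring
  rwa [e1, e2] at this

private lemma sum_range_even_odd (f : ℕ → ℤ) (n : ℕ) :
    ∑ i ∈ Finset.range (2*n), f i
      = ∑ i ∈ Finset.range n, f (2*i) + ∑ i ∈ Finset.range n, f (2*i+1) := by
  induction n with
  | zero => simp
  | succ n ih =>
    rw [show 2*(n+1) = 2*n+1+1 by ring, Finset.sum_range_succ, Finset.sum_range_succ, ih,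
      Finset.sum_range_succ (fun i => f (2*i)) n, Finset.sum_range_succ (fun i => f (2*i+1)) n]
    ring

private lemma osum (t : ℕ) :
    ∑ j ∈ Finset.range (2^(t+1)), ((2*(j:ℤ)+1)^2 % 2^(t+3))
      = 2^(2*t+3) - 3*2^(t+1) := by
  induction t with
  | zero =>
    norm_num [Finset.sum_range_succ]
  | succ t ih =>
    set n : ℕ := 2^(t+1) with hn
    have hn1 : 1 ≤ n := Nat.one_le_two_pow
    have hnz : (n:ℤ) = 2^(t+1) := by exact_mod_cast rfl
    have hsplit : (2:ℕ)^(t+2) = n + n := by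
      rw [hn]; ring
    have key2 : ∀ j ∈ Finset.range n,
        ((2*(j:ℤ)+1)^2 % 2^(t+4)) + ((2*((n:ℤ)-1-j)+1)^2 % 2^(t+4))
          = 2*((2*(j:ℤ)+1)^2 % 2^(t+3)) + 2^(t+3) := by
      intro j _
      have hpartner : (2*((n:ℤ)-1-j)+1) = 2^(t+2) - (2*(j:ℤ)+1) := by
        rw [hnz]; ring
      have hshift : ((2:ℤ)^(t+2) - (2*(j:ℤ)+1))^2 % 2^(t+4)
          = ((2*(j:ℤ)+1)^2 + 2^(t+3)) % 2^(t+4) := by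
        have hd : (2:ℤ)^(t+4) ∣
            ((2*(j:ℤ)+1)^2 + 2^(t+3)) - ((2:ℤ)^(t+2) - (2*(j:ℤ)+1))^2 := by
          refine ⟨(j:ℤ) + 1 - 2^t, ?_⟩
          ring
        have : ((2:ℤ)^(t+2) - (2*(j:ℤ)+1))^2 ≡ (2*(j:ℤ)+1)^2 + 2^(t+3)
            [ZMOD 2^(t+4)] := Int.modEq_iff_dvd.mpr hd
        exact this
      rw [hpartner, hshift]
      have := emod_key ((2*(j:ℤ)+1)^2) (2^(t+3)) (by positivity)
      rw [show (2:ℤ)*2^(t+3) = 2^(t+4) by ring] at this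
      linarith
    have hrefl2 : ∀ j ∈ Finset.range n,
        ((2*((n + j : ℕ):ℤ)+1)^2 % 2^(t+4)) = ((2*((n - 1 - j : ℕ):ℤ)+1)^2 % 2^(t+4)) := by
      intro j hj
      have hj' : j < n := Finset.mem_range.mp hj
      have hc1 : ((n + j : ℕ):ℤ) = (n:ℤ) + j := by push_cast; ring
      have hc2 : ((n - 1 - j : ℕ):ℤ) = (n:ℤ) - 1 - j := by omega
      rw [hc1, hc2]
      have harg : (2*((n:ℤ)+j)+1) = 2^(t+3) - (2*((n:ℤ)-1-j)+1) := by
        rw [hnz]; ring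
      rw [harg]
      exact sq_sub_emod _ _ _ ⟨2^(t+2), by ring⟩ ⟨1, by ring⟩
    have hhalf : ∑ j ∈ Finset.range (2^(t+2)), ((2*(j:ℤ)+1)^2 % 2^(t+4))
        = 2 * ∑ j ∈ Finset.range n, ((2*(j:ℤ)+1)^2 % 2^(t+4)) := by
      rw [hsplit, Finset.sum_range_add, Finset.sum_congr rfl hrefl2]
      have := Finset.sum_range_reflect (fun j => ((2*(j:ℤ)+1)^2 % 2^(t+4))) n
      rw [this]; ring
    have hdouble : 2 * ∑ j ∈ Finset.range n, ((2*(j:ℤ)+1)^2 % 2^(t+4))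
        = 2 * (∑ j ∈ Finset.range n, ((2*(j:ℤ)+1)^2 % 2^(t+3))) + (n:ℤ) * 2^(t+3) := by
      have hre := Finset.sum_range_reflect
        (fun j => ((2*(j:ℤ)+1)^2 % 2^(t+4))) n
      calc 2 * ∑ j ∈ Finset.range n, ((2*(j:ℤ)+1)^2 % 2^(t+4))
          = ∑ j ∈ Finset.range n, ((2*(j:ℤ)+1)^2 % 2^(t+4))
            + ∑ j ∈ Finset.range n, ((2*((n - 1 - j : ℕ):ℤ)+1)^2 % 2^(t+4)) := by
            rw [hre]; ring
        _ = ∑ j ∈ Finset.range n,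
              (((2*(j:ℤ)+1)^2 % 2^(t+4)) + ((2*((n - 1 - j : ℕ):ℤ)+1)^2 % 2^(t+4))) := by
            rw [Finset.sum_add_distrib]
        _ = ∑ j ∈ Finset.range n, (2*((2*(j:ℤ)+1)^2 % 2^(t+3)) + 2^(t+3)) := by
            refine Finset.sum_congr rfl ?_
            intro j hj
            have hj' : j < n := Finset.mem_range.mp hj
            have hc2 : ((n - 1 - j : ℕ):ℤ) = (n:ℤ) - 1 - j := by omega
            rw [hc2]
            exact key2 j hj
        _ = 2 * (∑ j ∈ Finset.range n, ((2*(j:ℤ)+1)^2 % 2^(t+3))) + (n:ℤ) * 2^(t+3) := by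
            rw [Finset.sum_add_distrib, Finset.sum_const, Finset.card_range,
              ← Finset.mul_sum, nsmul_eq_mul]
    rw [show t+1+1 = t+2 from rfl, show t+1+3 = t+4 from rfl, hhalf, hdouble, ih, hnz]
    ring

private lemma Rsum (b : ℕ) :
    ∑ k ∈ Finset.range (2^(2*b+1)), ((k:ℤ)^2 % 2^(2*b+2))
      = 2^(2*b) * (2^(2*b+2) - 3*2^(b+1) + 3) := by
  induction b with
  | zero => norm_num [Finset.sum_range_succ]
  | succ b ih =>
    have hsplit : (2:ℕ)^(2*(b+1)+1) = 2 * 2^(2*b+2) := by ring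
    rw [hsplit, sum_range_even_odd (fun k => ((k:ℤ)^2 % 2^(2*(b+1)+2)))]
    have heven : ∑ i ∈ Finset.range (2^(2*b+2)), (((2*i:ℕ):ℤ)^2 % 2^(2*(b+1)+2))
        = 8 * (2^(2*b) * (2^(2*b+2) - 3*2^(b+1) + 3)) := by
      have step1 : ∀ i ∈ Finset.range (2^(2*b+2)),
          (((2*i:ℕ):ℤ)^2 % 2^(2*(b+1)+2)) = 4 * ((i:ℤ)^2 % 2^(2*b+2)) := by
        intro i _
        have e1 : (((2*i:ℕ):ℤ))^2 = 4 * (i:ℤ)^2 := by push_cast; ring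
        have e2 : (2:ℤ)^(2*(b+1)+2) = 4 * 2^(2*b+2) := by ring
        rw [e1, e2]
        exact Int.mul_emod_mul_of_pos _ _ (by norm_num)
      rw [Finset.sum_congr rfl step1, ← Finset.mul_sum]
      have hsplit2 : (2:ℕ)^(2*b+2) = 2^(2*b+1) + 2^(2*b+1) := by ring
      have hper : ∀ i ∈ Finset.range (2^(2*b+1)),
          (((2^(2*b+1) + i : ℕ):ℤ)^2 % 2^(2*b+2)) = ((i:ℤ)^2 % 2^(2*b+2)) := by
        intro i _
        have hc : ((2^(2*b+1) + i : ℕ):ℤ) = (2:ℤ)^(2*b+1) + i := by push_cast; ring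
        rw [hc]
        exact sq_add_emod _ _ _ ⟨2^(2*b), by ring⟩ ⟨(i:ℤ), by ring⟩
      rw [hsplit2, Finset.sum_range_add, Finset.sum_congr rfl hper, ih]
      ring
    have hodd : ∑ i ∈ Finset.range (2^(2*b+2)), (((2*i+1:ℕ):ℤ)^2 % 2^(2*(b+1)+2))
        = 2^(4*b+5) - 3*2^(2*b+2) := by
      have := osum (2*b+1)
      have e : ∀ i ∈ Finset.range (2^(2*b+2)),
          (((2*i+1:ℕ):ℤ)^2 % 2^(2*(b+1)+2)) = ((2*(i:ℤ)+1)^2 % 2^((2*b+1)+3)) := by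
        intro i _
        have hc : (((2*i+1:ℕ)):ℤ) = 2*(i:ℤ)+1 := by push_cast; ring
        rw [hc, show 2*(b+1)+2 = (2*b+1)+3 by ring]
      rw [Finset.sum_congr rfl e]
      rw [show (2:ℕ)^(2*b+1+1) = 2^(2*b+2) by ring] at this
      rw [this]
      ring
    rw [heven, hodd]
    ring

theorem sum_rem_two_pow_even (β : ℕ) (hβ : 1 ≤ β) :
    (∑ k ∈ Finset.Icc 1 (2 ^ (2 * β - 1)), ((k ^ 2 % 2 ^ (2 * β) : ℕ) : ℤ)) =
      2 ^ (2 * β - 2) * (2 ^ (2 * β) - 3 * 2 ^ β + 3 : ℤ) := by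
  obtain ⟨b, rfl⟩ : ∃ b, β = b + 1 := ⟨β - 1, by omega⟩
  have e1 : 2 * (b+1) - 1 = 2*b+1 := by omega
  have e2 : 2 * (b+1) - 2 = 2*b := by omega
  have e3 : 2 * (b+1) = 2*b+2 := by omega
  rw [e1, e2, e3]
  have hcast : ∀ k ∈ Finset.Icc 1 (2^(2*b+1)),
      ((k ^ 2 % 2 ^ (2*b+2) : ℕ) : ℤ) = ((k:ℤ)^2 % 2^(2*b+2)) := by
    intro k _
    push_cast
    ring_nf
  rw [Finset.sum_congr rfl hcast, ← Finset.Ico_add_one_right_eq_Icc,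
    Finset.sum_Ico_eq_sum_range]
  simp only [Nat.add_sub_cancel]
  have h1 := Finset.sum_range_succ' (fun k => ((k:ℤ)^2 % 2^(2*b+2))) (2^(2*b+1))
  have h2 := Finset.sum_range_succ (fun k => ((k:ℤ)^2 % 2^(2*b+2))) (2^(2*b+1))
  have hM : (((2^(2*b+1):ℕ)):ℤ)^2 % 2^(2*b+2) = 0 := by
    have : (((2^(2*b+1):ℕ)):ℤ)^2 = 2^(2*b+2) * 2^(2*b) := by push_cast; ring
    rw [this]
    exact Int.mul_emod_right _ _
  have h0 : (((0:ℕ)):ℤ)^2 % 2^(2*b+2) = 0 := by norm_num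
  have key : ∑ k ∈ Finset.range (2^(2*b+1)), (((1+k:ℕ):ℤ)^2 % 2^(2*b+2))
      = ∑ k ∈ Finset.range (2^(2*b+1)), ((k:ℤ)^2 % 2^(2*b+2)) := by
    have e : ∀ k ∈ Finset.range (2^(2*b+1)),
        (((1+k:ℕ):ℤ)^2 % 2^(2*b+2)) = (((k+1:ℕ):ℤ)^2 % 2^(2*b+2)) := by
      intro k _
      rw [Nat.add_comm]
    rw [Finset.sum_congr rfl e]
    omega
  rw [key, Rsum]
end

section
/- For every integer β ≥ 1, the sum over k from 1 to 2^(2β) of (k^2 mod 2^(2β+1)) equals 2^(2β-1) * (2^(2β+1) - 4*2^β + 3). -/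
section Helpers
open Finset
theorem sum_range_two_mul (f : ℕ → ℕ) (n : ℕ) : ∑ k ∈ range (2*n), f k = ∑ i ∈ range n, (f (2*i) + f (2*i+1)) := by
  induction n with
  | zero => simp
  | succ n ih =>
    rw [Nat.mul_succ, Finset.sum_range_succ, Finset.sum_range_succ, ih, Finset.sum_range_succ]
    omega

lemma inj_aux (s i i' : ℕ) (h1 : i < 2^s) (h2 : i' < 2^s) (hle : i' ≤ i)
    (h : (2*i+1)^2 % 2^(s+3) = (2*i'+1)^2 % 2^(s+3)) : i = i' := by
  have hmod : (2*i'+1)^2 ≡ (2*i+1)^2 [MOD 2^(s+3)] := h.symm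
  have hdvd : (2^(s+3) : ℕ) ∣ (2*i+1)^2 - (2*i'+1)^2 := (Nat.modEq_iff_dvd' (by gcongr <;> omega)).mp hmod
  have hfac : (2*i+1)^2 - (2*i'+1)^2 = 4 * ((i+i'+1) * (i-i')) := by
    have h3 : (2*i+1)^2 = (2*i'+1)^2 + 4*((i+i'+1)*(i-i')) := by
      have h4 : i - i' + i' = i := by omega
      nlinarith [h4]
    omega
  rw [hfac] at hdvd
  have hdvd2 : (2^(s+1) : ℕ) ∣ (i+i'+1) * (i-i') := by
    have h5 : (2:ℕ)^(s+3) = 4 * 2^(s+1) := by ring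
    rw [h5] at hdvd
    exact (Nat.mul_dvd_mul_iff_left (by norm_num : (0:ℕ) < 4)).mp hdvd
  rcases Nat.even_or_odd (i - i') with hv | hv
  · have hu : Odd (i+i'+1) := by
      rcases Nat.even_or_odd (i+i'+1) with he | ho
      · exfalso
        have : Even ((i+i'+1) + (i-i')) := Even.add he hv
        have h6 : (i+i'+1) + (i-i') = 2*i+1 := by omega
        rw [h6] at this
        have h8 := Nat.even_iff.mp this
        omega
      · exact ho
    have hcop : Nat.Coprime (2^(s+1)) (i+i'+1) :=
      Nat.Coprime.pow_left _ (Nat.coprime_two_left.mpr hu)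
    have hd : (2^(s+1) : ℕ) ∣ (i - i') := hcop.dvd_of_dvd_mul_left hdvd2
    rcases Nat.eq_zero_or_pos (i - i') with h0 | h0
    · omega
    · have := Nat.le_of_dvd h0 hd
      have h7 : (2:ℕ)^(s+1) = 2^s + 2^s := by ring
      omega
  · have hcop : Nat.Coprime (2^(s+1)) (i-i') :=
      Nat.Coprime.pow_left _ (Nat.coprime_two_left.mpr hv)
    have hdu : (2^(s+1) : ℕ) ∣ (i+i'+1) := hcop.dvd_of_dvd_mul_right hdvd2
    have := Nat.le_of_dvd (by omega) hdu
    have h7 : (2:ℕ)^(s+1) = 2^s + 2^s := by ring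
    omega

-- reflection identity
lemma refl_sq (s i j : ℕ) (hij : i + j + 1 = 2^s) :
    (2*(2^s+i)+1)^2 % 2^(s+3) = (2*j+1)^2 % 2^(s+3) := by
  have h : (2*(2^s+i)+1)^2 = (2*j+1)^2 + 2^(s+3)*(2*i+1) := by
    have h8 : (2:ℕ)^(s+3) = 8 * 2^s := by ring
    rw [← hij, h8, ← hij]; ring
  rw [h, Nat.add_mul_mod_self_left]

-- period identity for even part
lemma period_sq (N x : ℕ) : (x + 2*N)^2 % (4*N) = x^2 % (4*N) := by
  have h : (x + 2*N)^2 = x^2 + (4*N)*(x+N) := by ring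
  rw [h, Nat.add_mul_mod_self_left]

lemma H_mem (s i : ℕ) : (2*i+1)^2 % 2^(s+3) % 8 = 1 ∧ (2*i+1)^2 % 2^(s+3) < 2^(s+3) := by
  constructor
  · rw [Nat.mod_mod_of_dvd _ (by exact Dvd.intro (2^s) (by ring))]
    obtain ⟨m, hm⟩ := Nat.even_mul_succ_self i
    have h : (2*i+1)^2 = 8*m+1 := by nlinarith [hm]
    omega
  · exact Nat.mod_lt _ (by positivity)

lemma sum_8j1 (n : ℕ) : ∑ j ∈ range n, (8*j+1) + 3*n = 4*n*n := by
  induction n with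
  | zero => simp
  | succ n ih => rw [Finset.sum_range_succ]; nlinarith [ih]

lemma odd_sum (s : ℕ) :
    ∑ i ∈ range (2^(s+1)), (2*i+1)^2 % 2^(s+3) = 2^(s+1) * (2^(s+2) - 3) := by
  have hhalf : ∑ i ∈ range (2^(s+1)), (2*i+1)^2 % 2^(s+3)
      = 2 * ∑ i ∈ range (2^s), (2*i+1)^2 % 2^(s+3) := by
    have h1 : (2:ℕ)^(s+1) = 2^s + 2^s := by ring
    rw [h1, Finset.sum_range_add]
    have h2 : ∀ i ∈ range (2^s), (2*(2^s+i)+1)^2 % 2^(s+3)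
        = (fun j => (2*j+1)^2 % 2^(s+3)) (2^s-1-i) := by
      intro i hi
      rw [mem_range] at hi
      exact refl_sq s i _ (by omega)
    rw [Finset.sum_congr rfl h2, Finset.sum_range_reflect (fun j => (2*j+1)^2 % 2^(s+3)) (2^s)]
    omega
  have hinj : ∀ i ∈ range (2^s), ∀ i' ∈ range (2^s),
      (2*i+1)^2 % 2^(s+3) = (2*i'+1)^2 % 2^(s+3) → i = i' := by
    intro i hi i' hi' h
    rw [mem_range] at hi hi'
    rcases le_total i' i with hle | hle
    · exact inj_aux s i i' hi hi' hle h
    · exact (inj_aux s i' i hi' hi hle h.symm).symm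
  have hinj8 : Function.Injective (fun j : ℕ => 8*j+1) := by
    intro a b h; simp only at h; omega
  have himg : (range (2^s)).image (fun i => (2*i+1)^2 % 2^(s+3))
      = (range (2^s)).image (fun j => 8*j+1) := by
    apply Finset.eq_of_subset_of_card_le
    · intro r hr
      rw [Finset.mem_image] at hr ⊢
      obtain ⟨i, hi, hri⟩ := hr
      obtain ⟨hm8, hlt⟩ := H_mem s i
      refine ⟨r / 8, ?_, ?_⟩
      · rw [mem_range]
        have h8 : (2:ℕ)^(s+3) = 8 * 2^s := by ring
        omega
      · omega
    · rw [Finset.card_image_of_injective _ hinj8, Finset.card_image_of_injOn hinj]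
  have key : ∑ i ∈ range (2^s), (2*i+1)^2 % 2^(s+3) = ∑ j ∈ range (2^s), (8*j+1) := by
    have e1 : ∑ r ∈ (range (2^s)).image (fun i => (2*i+1)^2 % 2^(s+3)), r
        = ∑ i ∈ range (2^s), (2*i+1)^2 % 2^(s+3) := Finset.sum_image hinj
    have e2 : ∑ r ∈ (range (2^s)).image (fun j => 8*j+1), r
        = ∑ j ∈ range (2^s), (8*j+1) := Finset.sum_image (fun a _ b _ h => hinj8 h)
    rw [← e1, himg, e2]
  have h4 := sum_8j1 (2^s)
  have h5 : (2:ℕ)^(s+2) = 4 * 2^s := by ring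
  have h6 : 3 ≤ (2:ℕ)^(s+2) := by have := Nat.one_le_two_pow (n := s); omega
  rw [hhalf, key]
  have h7 : (2:ℕ)^(s+1) = 2 * 2^s := by ring
  rw [Nat.mul_sub, h5, h7]
  have h9 : 2*2^s*(4*2^s) = 2*(∑ j ∈ range (2^s), (8*j+1)) + 2*2^s*3 := by nlinarith [h4]
  omega

lemma sum_Icc_one (f : ℕ → ℕ) (m : ℕ) : ∑ k ∈ Icc 1 m, f k = ∑ i ∈ range m, f (1+i) := by
  rw [← Finset.Ico_add_one_right_eq_Icc, Finset.sum_Ico_eq_sum_range]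
  simp

theorem main_nat (β : ℕ) (hβ : 1 ≤ β) :
    ∑ k ∈ Icc 1 (2^(2*β)), k^2 % 2^(2*β+1) = 2^(2*β-1) * (2^(2*β+1) - 4*2^β + 3) := by
  induction β, hβ using Nat.le_induction with
  | base => decide
  | succ n hn ih =>
    obtain ⟨γ, rfl⟩ : ∃ γ, n = γ+1 := ⟨n-1, by omega⟩
    have e1 : 2*(γ+1+1) = (2*(γ+1)+1)+1 := by omega
    have e2 : 2*(γ+1+1)+1 = (2*(γ+1))+3 := by omega
    rw [e2, e1, sum_Icc_one]
    have e3 : (2:ℕ)^(2*(γ+1)+1+1) = 2 * 2^(2*(γ+1)+1) := by rw [pow_succ]; ring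
    rw [e3, sum_range_two_mul, Finset.sum_add_distrib]
    have hodd : ∑ i ∈ range (2^(2*(γ+1)+1)), (1+2*i)^2 % 2^(2*(γ+1)+3)
        = 2^(2*(γ+1)+1) * (2^(2*(γ+1)+2) - 3) := by
      rw [Finset.sum_congr rfl (fun i _ => by rw [add_comm 1 (2*i)])]
      exact odd_sum (2*(γ+1))
    have heven : ∑ i ∈ range (2^(2*(γ+1)+1)), (1+(2*i+1))^2 % 2^(2*(γ+1)+3)
        = 8 * (2^(2*(γ+1)-1) * (2^(2*(γ+1)+1) - 4*2^(γ+1) + 3)) := by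
      have step1 : ∀ i ∈ range (2^(2*(γ+1)+1)), (1+(2*i+1))^2 % 2^(2*(γ+1)+3)
          = 4 * ((i+1)^2 % 2^(2*(γ+1)+1)) := by
        intro i _
        have q1 : (1+(2*i+1))^2 = 4*(i+1)^2 := by ring
        have q2 : (2:ℕ)^(2*(γ+1)+3) = 4 * 2^(2*(γ+1)+1) := by ring
        rw [q1, q2, Nat.mul_mod_mul_left]
      rw [Finset.sum_congr rfl step1, ← Finset.mul_sum]
      have split : ∑ i ∈ range (2^(2*(γ+1)+1)), (i+1)^2 % 2^(2*(γ+1)+1)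
          = 2 * ∑ i ∈ range (2^(2*(γ+1))), (i+1)^2 % 2^(2*(γ+1)+1) := by
        have e4 : (2:ℕ)^(2*(γ+1)+1) = 2^(2*(γ+1)) + 2^(2*(γ+1)) := by rw [pow_succ]; ring
        rw [e4, Finset.sum_range_add]
        have e5 : ∀ i ∈ range (2^(2*(γ+1))), (2^(2*(γ+1))+i+1)^2 % (2^(2*(γ+1))+2^(2*(γ+1)))
            = (i+1)^2 % (2^(2*(γ+1))+2^(2*(γ+1))) := by
          intro i _
          have q3 : 2^(2*(γ+1))+i+1 = (i+1) + 2*2^(2*γ+1) := by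
            have : (2:ℕ)^(2*(γ+1)) = 2 * 2^(2*γ+1) := by rw [← pow_succ']; ring_nf
            omega
          have q4 : (2:ℕ)^(2*(γ+1))+2^(2*(γ+1)) = 4 * 2^(2*γ+1) := by
            have : (2:ℕ)^(2*(γ+1)) = 2 * 2^(2*γ+1) := by rw [← pow_succ']; ring_nf
            omega
          rw [q3, q4, period_sq]
        rw [Finset.sum_congr rfl e5]
        omega
      rw [split]
      have ihr : ∑ i ∈ range (2^(2*(γ+1))), (i+1)^2 % 2^(2*(γ+1)+1)
          = 2^(2*(γ+1)-1) * (2^(2*(γ+1)+1) - 4*2^(γ+1) + 3) := by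
        rw [← ih, sum_Icc_one]
        exact Finset.sum_congr rfl (fun i _ => by rw [add_comm 1 i])
      rw [ihr]; ring
    rw [hodd, heven]
    -- final arithmetic
    have b1 : 4*2^(γ+1) ≤ 2^(2*(γ+1)+1) := by
      have : (4:ℕ)*2^(γ+1) = 2^(γ+3) := by ring
      rw [this]
      exact Nat.pow_le_pow_right (by norm_num) (by omega)
    have b2 : 4*2^(γ+1+1) ≤ 2^(2*(γ+1)+3) := by
      have : (4:ℕ)*2^(γ+1+1) = 2^(γ+4) := by ring
      rw [this]
      exact Nat.pow_le_pow_right (by norm_num) (by omega)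
    have b3 : (3:ℕ) ≤ 2^(2*(γ+1)+2) := by
      have : (2:ℕ)^2 ≤ 2^(2*(γ+1)+2) := Nat.pow_le_pow_right (by norm_num) (by omega)
      omega
    have e6 : 2*(γ+1)-1 = 2*γ+1 := by omega
    have e7 : 2*(γ+1)+1+1-1 = 2*γ+3 := by omega
    rw [e6, e7]
    zify [b1, b2, b3]
    push_cast
    ring_nf
end Helpers

theorem sum_rem_two_pow_odd (β : ℕ) (hβ : 1 ≤ β) :
    (∑ k ∈ Finset.Icc 1 (2 ^ (2 * β)), ((k ^ 2 % 2 ^ (2 * β + 1) : ℕ) : ℤ)) =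
      2 ^ (2 * β - 1) * (2 ^ (2 * β + 1) - 4 * 2 ^ β + 3 : ℤ) := by
  have b : 4*2^β ≤ 2^(2*β+1) := by
    have : (4:ℕ)*2^β = 2^(β+2) := by ring
    rw [this]
    exact Nat.pow_le_pow_right (by norm_num) (by omega)
  have h := main_nat β hβ
  rw [← Nat.cast_sum, h]
  push_cast [b]
  ring
end

section
/- Let p be a prime with p ≡ 1 (mod 4) and β ≥ 0 an integer. Then the sum over k from 1 to (p^(2β+1) - 1)/2 of (k^2 mod p^(2β+1)) equals (1/4) * p^(3β+1) * (p^(β+1) - 1). -/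
open Finset

lemma periodic_sum (g : ℕ → ℕ) (q : ℕ) (hg : ∀ x, g (x + q) = g x) (t r : ℕ) :
    ∑ j ∈ range (t * q + r), g j = t * (∑ j ∈ range q, g j) + ∑ j ∈ range r, g j := by
  induction t with
  | zero => simp
  | succ t ih =>
    have h1 : (t+1) * q + r = q + (t*q + r) := by ring
    rw [h1, Finset.sum_range_add]
    have h2 : ∑ i ∈ range (t*q+r), g (q + i) = ∑ i ∈ range (t*q+r), g i :=
      Finset.sum_congr rfl fun i _ => by rw [add_comm q i, hg]
    rw [h2, ih]; ring
open Finset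

lemma sq_reflect (q j : ℕ) (hj : j ≤ q) : (q - j)^2 % q = j^2 % q := by
  have h : ((j:ℤ)^2) ≡ (((q:ℤ)-j)^2) [ZMOD (q:ℤ)] := by
    apply Int.modEq_iff_dvd.mpr
    exact ⟨(q:ℤ) - 2*j, by ring⟩
  have h2 : (((q-j)^2 % q : ℕ) : ℤ) = ((j^2 % q : ℕ) : ℤ) := by
    push_cast [Int.natCast_mod, Nat.cast_sub hj]
    exact h.symm
  exact_mod_cast h2

lemma range_reflect (q : ℕ) (hq : q % 2 = 1) :
    ∑ j ∈ range q, (j^2 % q) = 2 * ∑ j ∈ Icc 1 ((q-1)/2), (j^2 % q) := by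
  have h1 : range q = insert 0 (Ioc 0 (q-1)) := by
    ext x; simp [Finset.mem_Ioc]; omega
  rw [h1, Finset.sum_insert (by simp)]
  norm_num
  have h2 : (0:ℕ) ≤ (q-1)/2 := Nat.zero_le _
  have h3 : (q-1)/2 ≤ q-1 := by omega
  rw [← Finset.sum_Ioc_consecutive (fun j => j^2 % q) h2 h3]
  have h4 : ∑ j ∈ Ioc ((q-1)/2) (q-1), (j^2 % q) = ∑ j ∈ Ioc 0 ((q-1)/2), (j^2 % q) := by
    apply Finset.sum_nbij' (i := fun j => q - j) (j := fun j => q - j)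
    · intro a ha; simp only [Finset.mem_Ioc] at *; omega
    · intro a ha; simp only [Finset.mem_Ioc] at *; omega
    · intro a ha; simp only [Finset.mem_Ioc] at ha; omega
    · intro a ha; simp only [Finset.mem_Ioc] at ha; omega
    · intro a ha; simp only [Finset.mem_Ioc] at ha
      exact (sq_reflect q a (by omega)).symm
  rw [h4]
  have h5 : Ioc 0 ((q-1)/2) = Icc 1 ((q-1)/2) := by ext x; simp; omega
  rw [h5]; ring
lemma sq_mod_periodic (q : ℕ) : ∀ x, (x + q)^2 % q = x^2 % q := by
  intro x
  have : (x + q)^2 = x^2 + (2*x + q) * q := by ring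
  rw [this, Nat.add_mul_mod_self_right]
lemma fold_sum (p q : ℕ) (hq : q % 2 = 1) (hp : p % 2 = 1) :
    ∑ j ∈ Finset.Icc 1 ((p*q-1)/2), (j^2 % q) = p * ∑ j ∈ Finset.Icc 1 ((q-1)/2), (j^2 % q) := by
  open Finset in
  have h1 : ∑ j ∈ Icc 1 ((p*q-1)/2), (j^2 % q) = ∑ j ∈ range ((p*q-1)/2 + 1), (j^2 % q) := by
    have : range ((p*q-1)/2 + 1) = insert 0 (Icc 1 ((p*q-1)/2)) := by
      ext x; simp; omega
    rw [this, Finset.sum_insert (by simp)]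
    norm_num
  open Finset in
  have hN : (p*q-1)/2 + 1 = (p-1)/2 * q + ((q-1)/2 + 1) := by
    obtain ⟨a, rfl⟩ : ∃ a, p = 2*a+1 := ⟨p/2, by omega⟩
    obtain ⟨b, rfl⟩ : ∃ b, q = 2*b+1 := ⟨q/2, by omega⟩
    have h3 : (2*a+1-1)/2 = a := by omega
    have key : (2*a+1)*(2*b+1) = 2*(2*(a*b)+a+b) + 1 := by ring
    have key2 : a*(2*b+1) = 2*(a*b) + a := by ring
    rw [key, h3, key2]
    generalize a*b = c
    omega
  open Finset in
  have h2 : range ((q-1)/2 + 1) = insert 0 (Icc 1 ((q-1)/2)) := by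
    ext x; simp; omega
  rw [h1, hN, periodic_sum _ q (sq_mod_periodic q), h2,
    Finset.sum_insert (by simp), range_reflect q hq]
  norm_num
  have hp2 : (p-1)/2 * 2 + 1 = p := by omega
  generalize (p-1)/2 = a at hp2 ⊢
  subst hp2
  ring

lemma exists_sqrt_neg_one (p : ℕ) (hp : p.Prime) (h1 : p % 4 = 1) (m : ℕ) :
    ∃ I : ℕ, p^m ∣ I^2 + 1 := by
  haveI := Fact.mk hp
  obtain ⟨y, hy⟩ := (ZMod.exists_sq_eq_neg_one_iff (p := p)).2 (by omega)
  have ha : (p:ℤ) ∣ (y.val:ℤ)^2 + 1 := by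
    have h0 : (((y.val:ℤ)^2 + 1 : ℤ) : ZMod p) = 0 := by
      push_cast
      rw [ZMod.natCast_val, ZMod.cast_id]
      rw [pow_two, ← hy]; ring
    exact (ZMod.intCast_zmod_eq_zero_iff_dvd _ p).mp h0
  match m with
  | 0 => exact ⟨0, one_dvd _⟩
  | (k+1) =>
    refine ⟨y.val ^ (p^k), ?_⟩
    have hd := dvd_sub_pow_of_dvd_sub (p := p) (a := ((y.val:ℤ)^2)) (b := (-1:ℤ))
      (by simpa using ha) k
    have hodd : Odd (p^k) := (hp.odd_of_ne_two (by omega)).pow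
    rw [hodd.neg_one_pow] at hd
    have : ((p:ℤ))^(k+1) ∣ ((y.val ^ (p^k))^2 + 1 : ℕ) := by
      push_cast
      convert hd using 1
      · rfl
      ring
    exact_mod_cast this
open Finset

lemma coprime_reflect (n a : ℕ) (h : a ≤ n) (h0 : 0 < n) :
    n.Coprime (n - a) ↔ n.Coprime a := by
  unfold Nat.Coprime
  have e1 : n = a + (n - a) := by omega
  rw [show Nat.gcd n (n-a) = Nat.gcd n a from by
    calc Nat.gcd n (n-a) = Nat.gcd (n-a) n := Nat.gcd_comm _ _
      _ = Nat.gcd (n-a) (a + (n-a)) := by rw [← e1]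
      _ = Nat.gcd (n-a) a := Nat.gcd_add_self_right _ _
      _ = Nat.gcd n a := Nat.gcd_sub_self_left h]

lemma card_coprime_half (n : ℕ) (hn : 1 < n) (hodd : n % 2 = 1) :
    2 * ((Icc 1 ((n-1)/2)).filter (fun k => n.Coprime k)).card = n.totient := by
  rw [Nat.totient]
  have h1 : ({a ∈ range n | n.Coprime a} : Finset ℕ) =
      (Icc 1 ((n-1)/2)).filter (fun k => n.Coprime k) ∪
      (Icc ((n-1)/2+1) (n-1)).filter (fun k => n.Coprime k) := by
    ext x
    simp only [Finset.mem_filter, Finset.mem_union, Finset.mem_range, Finset.mem_Icc]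
    constructor
    · rintro ⟨hx, hc⟩
      have hx0 : x ≠ 0 := by
        rintro rfl
        rw [Nat.coprime_zero_right] at hc
        omega
      rcases le_or_gt x ((n-1)/2) with h|h
      · exact Or.inl ⟨⟨by omega, h⟩, hc⟩
      · exact Or.inr ⟨⟨by omega, by omega⟩, hc⟩
    · rintro (⟨⟨ha, hb⟩, hc⟩ | ⟨⟨ha, hb⟩, hc⟩) <;> exact ⟨by omega, hc⟩
  have hdisj : Disjoint ((Icc 1 ((n-1)/2)).filter (fun k => n.Coprime k))
      ((Icc ((n-1)/2+1) (n-1)).filter (fun k => n.Coprime k)) := by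
    apply Finset.disjoint_filter_filter
    rw [Finset.disjoint_left]
    intro x hx hy
    simp only [Finset.mem_Icc] at hx hy
    omega
  rw [h1, Finset.card_union_of_disjoint hdisj]
  have h2 : ((Icc ((n-1)/2+1) (n-1)).filter (fun k => n.Coprime k)).card =
      ((Icc 1 ((n-1)/2)).filter (fun k => n.Coprime k)).card := by
    apply Finset.card_nbij (i := fun k => n - k)
    · intro a ha
      simp only [Finset.mem_coe, Finset.mem_filter, Finset.mem_Icc] at ha ⊢
      obtain ⟨⟨ha1, ha2⟩, hac⟩ := ha
      exact ⟨⟨by omega, by omega⟩, (coprime_reflect n a (by omega) (by omega)).mpr hac⟩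
    · intro a ha b hb hab
      simp only [Finset.mem_coe, Finset.mem_filter, Finset.mem_Icc] at ha hb
      simp only at hab
      omega
    · intro b hb
      simp only [Finset.coe_filter, Finset.mem_Icc, Set.mem_image, Set.mem_setOf_eq] at hb ⊢
      obtain ⟨⟨hb1, hb2⟩, hbc⟩ := hb
      refine ⟨n - b, ⟨⟨by omega, by omega⟩, ?_⟩, by omega⟩
      exact (coprime_reflect n b (by omega) (by omega)).mpr hbc
  omega
open Finset

lemma pairing_sum (n I : ℕ) (hn : 1 < n) (hodd : n % 2 = 1) (hI : n ∣ I^2 + 1) :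
    2 * ∑ k ∈ (Icc 1 ((n-1)/2)).filter (fun k => n.Coprime k), ((k^2 % n : ℕ) : ℤ)
      = n * ((Icc 1 ((n-1)/2)).filter (fun k => n.Coprime k)).card := by
  haveI : NeZero n := ⟨by omega⟩
  haveI := Fact.mk hn
  set s := (Icc 1 ((n-1)/2)).filter (fun k => n.Coprime k) with hs
  have hIcop : IsUnit (I : ZMod n) := by
    rw [ZMod.isUnit_iff_coprime]
    have d1 : Nat.gcd I n ∣ I^2 + 1 := dvd_trans (Nat.gcd_dvd_right I n) hI
    have d2 : Nat.gcd I n ∣ I^2 := dvd_trans (Nat.gcd_dvd_left I n) (dvd_pow_self I two_ne_zero)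
    have h1 : Nat.gcd I n ∣ 1 := by
      have := Nat.dvd_sub d1 d2
      simpa using this
    exact Nat.eq_one_of_dvd_one h1
  have hI2 : (I : ZMod n)^2 = -1 := by
    have h0 : ((I^2 + 1 : ℕ) : ZMod n) = 0 := (ZMod.natCast_eq_zero_iff _ _).mpr hI
    push_cast at h0
    linear_combination h0
  set σ : ℕ → ℕ := fun k => min ((I*k) % n) (n - (I*k) % n) with hσ
  have mem_facts : ∀ k ∈ s, 1 ≤ k ∧ k ≤ (n-1)/2 ∧ IsUnit (k : ZMod n) ∧ (k : ZMod n).val = k := by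
    intro k hk
    rw [hs, Finset.mem_filter, Finset.mem_Icc] at hk
    obtain ⟨⟨h1, h2⟩, hc⟩ := hk
    refine ⟨h1, h2, ?_, ZMod.val_natCast_of_lt (by omega)⟩
    rw [ZMod.isUnit_iff_coprime]
    exact Nat.coprime_comm.mp hc
  have sqmod : ∀ k : ℕ, k^2 % n = ((k : ZMod n)^2).val := by
    intro k
    rw [← Nat.cast_pow, ZMod.val_natCast]
  have key : ∀ k ∈ s, σ k ∈ s ∧
      ((σ k : ZMod n) = (I : ZMod n) * k ∨ (σ k : ZMod n) = -((I : ZMod n) * k)) ∧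
      (σ k)^2 % n = n - k^2 % n := by
    intro k hk
    obtain ⟨hk1, hk2, hku, hkv⟩ := mem_facts k hk
    have hkne : (k : ZMod n) ≠ 0 := hku.ne_zero
    have hru : IsUnit ((I*k : ℕ) : ZMod n) := by push_cast; exact hIcop.mul hku
    have hrval : ((I*k : ℕ) : ZMod n).val = (I*k) % n := ZMod.val_natCast _ _
    have hrne : (I*k) % n ≠ 0 := by
      intro h0
      exact hru.ne_zero (by rwa [← ZMod.val_eq_zero, hrval])
    have hrlt : (I*k) % n < n := Nat.mod_lt _ (by omega)
    have hcast_r : (((I*k) % n : ℕ) : ZMod n) = (I : ZMod n) * k := by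
      rw [ZMod.natCast_mod]; push_cast; ring
    have hcast_nr : ((n - (I*k) % n : ℕ) : ZMod n) = -((I : ZMod n) * k) := by
      rw [Nat.cast_sub (le_of_lt hrlt), ZMod.natCast_self, zero_sub, hcast_r]
    have hsign : (σ k : ZMod n) = (I : ZMod n) * k ∨ (σ k : ZMod n) = -((I : ZMod n) * k) := by
      rcases min_cases ((I*k) % n) (n - (I*k) % n) with ⟨h, _⟩ | ⟨h, _⟩
      · left; rw [hσ]; simp only; rw [h, hcast_r]
      · right; rw [hσ]; simp only; rw [h, hcast_nr]
    have hσu : IsUnit (σ k : ZMod n) := by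
      rcases hsign with h | h <;> rw [h]
      · exact hIcop.mul hku
      · exact (hIcop.mul hku).neg
    have hσsq : ((σ k : ZMod n))^2 = -((k : ZMod n)^2) := by
      rcases hsign with h | h
      · rw [h, mul_pow, hI2]; ring
      · rw [h, neg_sq, mul_pow, hI2]; ring
    have hk2ne : ((k : ZMod n))^2 ≠ 0 := (hku.pow 2).ne_zero
    have hσmod : (σ k)^2 % n = n - k^2 % n := by
      rw [sqmod, sqmod, hσsq, ZMod.neg_val, if_neg hk2ne]
    have hσmem : σ k ∈ s := by
      rw [hs, Finset.mem_filter, Finset.mem_Icc]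
      have hb : 1 ≤ σ k ∧ σ k ≤ (n-1)/2 := by
        rw [hσ]; simp only
        omega
      refine ⟨⟨hb.1, hb.2⟩, ?_⟩
      rw [Nat.coprime_comm, ← ZMod.isUnit_iff_coprime]
      exact hσu
    exact ⟨hσmem, hsign, hσmod⟩
  have hinv : ∀ k ∈ s, σ (σ k) = k := by
    intro k hk
    obtain ⟨hk1, hk2, hku, hkv⟩ := mem_facts k hk
    have hkne : (k : ZMod n) ≠ 0 := hku.ne_zero
    obtain ⟨hmem, hsign, _⟩ := key k hk
    have hval' : ((I * σ k : ℕ) : ZMod n).val = k ∨ ((I * σ k : ℕ) : ZMod n).val = n - k := by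
      rcases hsign with h | h
      · right
        have hc : ((I * σ k : ℕ) : ZMod n) = -(k : ZMod n) := by
          push_cast; rw [h]
          linear_combination (k : ZMod n) * hI2
        rw [hc, ZMod.neg_val, if_neg hkne, hkv]
      · left
        have hc : ((I * σ k : ℕ) : ZMod n) = (k : ZMod n) := by
          push_cast; rw [h]
          linear_combination (-(k : ZMod n)) * hI2
        rw [hc, hkv]
    have hgoal : σ (σ k) = min ((I * σ k) % n) (n - (I * σ k) % n) := by rw [hσ]
    rw [hgoal, ← ZMod.val_natCast n (I * σ k)]
    rcases hval' with h | h <;> rw [h] <;> omega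
  -- the involution sum
  have hzero : ∑ k ∈ s, (2 * ((k^2 % n : ℕ) : ℤ) - n) = 0 := by
    apply Finset.sum_involution (g := fun k _ => σ k)
    · intro a ha
      obtain ⟨_, _, hmod⟩ := key a ha
      have h1 : a^2 % n < n := Nat.mod_lt _ (by omega)
      have h2 : (σ a)^2 % n = n - a^2 % n := hmod
      have h3 : ((((σ a)^2 % n : ℕ)) : ℤ) = (n : ℤ) - ((a^2 % n : ℕ) : ℤ) := by
        rw [h2, Nat.cast_sub (le_of_lt h1)]
      rw [h3]; ring
    · intro a ha _
      obtain ⟨_, _, hmod⟩ := key a ha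
      intro heq
      rw [heq] at hmod
      have h1 : a^2 % n < n := Nat.mod_lt _ (by omega)
      have h2 : a^2 % n ≠ 0 := by
        obtain ⟨_, _, hku, _⟩ := mem_facts a ha
        rw [sqmod, Ne, ZMod.val_eq_zero]
        exact (hku.pow 2).ne_zero
      omega
    · intro a ha; exact (key a ha).1
    · intro a ha; exact hinv a ha
  have hcard : ∑ k ∈ s, (2 * ((k^2 % n : ℕ) : ℤ) - n) =
      2 * ∑ k ∈ s, ((k^2 % n : ℕ) : ℤ) - n * s.card := by
    rw [Finset.sum_sub_distrib, Finset.sum_const, ← Finset.mul_sum]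
    push_cast; ring
  rw [hcard] at hzero
  omega

lemma main_int (p : ℕ) (hp : p.Prime) (h1 : p % 4 = 1) : ∀ β : ℕ,
    4 * ∑ k ∈ Icc 1 ((p^(2*β+1)-1)/2), ((k^2 % p^(2*β+1) : ℕ) : ℤ)
      = (p:ℤ)^(3*β+1) * ((p:ℤ)^(β+1) - 1) := by
  have hp2 := hp.two_le
  have hp5 : 5 ≤ p := by
    rcases Nat.lt_or_ge p 5 with h | h
    · interval_cases p <;> omega
    · exact h
  have hodd : p % 2 = 1 := by omega
  have hpowodd : ∀ m : ℕ, p^m % 2 = 1 := by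
    intro m
    rw [Nat.pow_mod, hodd, one_pow]
    omega
  intro β
  induction β with
  | zero =>
    simp only [show 2*0+1 = 1 from rfl, show 3*0+1 = 1 from rfl, show (0:ℕ)+1 = 1 from rfl, pow_one]
    have hfilter : (Icc 1 ((p-1)/2)).filter (fun k => p.Coprime k) = Icc 1 ((p-1)/2) := by
      apply Finset.filter_true_of_mem
      intro k hk
      rw [Finset.mem_Icc] at hk
      exact (hp.coprime_iff_not_dvd).mpr (fun hd => by
        have := Nat.le_of_dvd (by omega) hd
        omega)
    obtain ⟨I, hI⟩ := exists_sqrt_neg_one p hp h1 1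
    have h2 := pairing_sum p I (by omega) hodd (by simpa using hI)
    have h3 := card_coprime_half p (by omega) hodd
    rw [hfilter] at h2 h3
    rw [Nat.totient_prime hp] at h3
    rw [Nat.card_Icc] at h2
    simp only [Nat.add_sub_cancel] at h2
    have hA : (2 * ((p-1)/2 : ℕ) : ℤ) = (p : ℤ) - 1 := by
      have hA' : 2 * ((p-1)/2) = p - 1 := by omega
      calc (2 * ((p-1)/2 : ℕ) : ℤ) = ((2 * ((p-1)/2) : ℕ) : ℤ) := by push_cast; ring
        _ = ((p - 1 : ℕ) : ℤ) := by rw [hA']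
        _ = (p : ℤ) - 1 := by rw [Nat.cast_sub (by omega)]; norm_num
    push_cast at h2 hA ⊢
    linear_combination 2 * h2 + (p:ℤ) * hA
  | succ β ih =>
    have he : 2*(β+1)+1 = 2*β+3 := by ring
    have he2 : 3*(β+1)+1 = 3*β+4 := by ring
    rw [he, he2]
    set n := p^(2*β+3) with hn
    have hn1 : 1 < n := Nat.one_lt_pow (by omega) (by omega)
    have hnodd : n % 2 = 1 := hpowodd _
    -- split
    have hsplit := Finset.sum_filter_add_sum_filter_not (Icc 1 ((n-1)/2))
      (fun k => n.Coprime k) (fun k => ((k^2 % n : ℕ) : ℤ))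
    -- coprime part
    obtain ⟨I, hI⟩ := exists_sqrt_neg_one p hp h1 (2*β+3)
    have hpair := pairing_sum n I hn1 hnodd hI
    have hcard := card_coprime_half n hn1 hnodd
    rw [Nat.totient_prime_pow hp (by omega)] at hcard
    have hexp : 2*β+3-1 = 2*β+2 := by omega
    rw [hexp] at hcard
    -- noncoprime part
    have hfeq : (Icc 1 ((n-1)/2)).filter (fun k => ¬ n.Coprime k)
        = (Icc 1 ((n-1)/2)).filter (fun k => p ∣ k) := by
      apply Finset.filter_congr
      intro k _
      rw [hn, Nat.coprime_pow_left_iff (by omega), hp.coprime_iff_not_dvd]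
      simp
    have hiff : ∀ j : ℕ, p*j ≤ (n-1)/2 ↔ j ≤ (p^(2*β+2)-1)/2 := by
      intro j
      have hq : n = p * p^(2*β+2) := by rw [hn]; ring
      set q := p^(2*β+2) with hqd
      have hqodd : q % 2 = 1 := hpowodd _
      obtain ⟨a, ha⟩ : ∃ a, q = 2*a+1 := ⟨(q-1)/2, by omega⟩
      have hpq : p*(2*a+1) = 2*(p*a) + p := by ring
      rw [hq, ha]
      constructor
      · intro h
        by_contra hc
        push_neg at hc
        have h4 : a + 1 ≤ j := by omega
        have h5 : p*(a+1) ≤ p*j := Nat.mul_le_mul (le_refl p) h4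
        have h6 : p*(a+1) = p*a + p := by ring
        omega
      · intro h
        have h4 : j ≤ a := by omega
        have h5 : p*j ≤ p*a := Nat.mul_le_mul (le_refl p) h4
        omega
    have hnc : ∑ k ∈ (Icc 1 ((n-1)/2)).filter (fun k => p ∣ k), ((k^2 % n : ℕ) : ℤ)
        = ∑ j ∈ Icc 1 ((p^(2*β+2)-1)/2), (((p*j)^2 % n : ℕ) : ℤ) := by
      apply Finset.sum_nbij' (i := fun k => k / p) (j := fun j => p * j)
      · intro a ha
        simp only [Finset.mem_filter, Finset.mem_Icc] at ha
        obtain ⟨⟨ha1, ha2⟩, c, rfl⟩ := ha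
        simp only [Finset.mem_Icc]
        rw [Nat.mul_div_cancel_left c (by omega)]
        exact ⟨by nlinarith [hp2], (hiff c).mp ha2⟩
      · intro j hj
        simp only [Finset.mem_Icc] at hj
        simp only [Finset.mem_filter, Finset.mem_Icc]
        exact ⟨⟨by nlinarith [hj.1, hp2], (hiff j).mpr hj.2⟩, ⟨j, rfl⟩⟩
      · intro a ha
        simp only [Finset.mem_filter] at ha
        obtain ⟨_, c, rfl⟩ := ha
        rw [Nat.mul_div_cancel_left c (by omega)]
      · intro j hj
        rw [Nat.mul_div_cancel_left j (by omega)]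
      · intro a ha
        simp only [Finset.mem_filter] at ha
        obtain ⟨_, c, rfl⟩ := ha
        rw [Nat.mul_div_cancel_left c (by omega)]
    have hmodeq : ∀ j : ℕ, (p*j)^2 % n = p^2 * (j^2 % p^(2*β+1)) := by
      intro j
      have h7 : (p*j)^2 = p^2 * j^2 := by ring
      have h8 : n = p^2 * p^(2*β+1) := by rw [hn]; ring
      rw [h7, h8, Nat.mul_mod_mul_left]
    have hfold := fold_sum p (p^(2*β+1)) (hpowodd _) hodd
    have hpp : p * p^(2*β+1) = p^(2*β+2) := by ring
    rw [hpp] at hfold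
    -- assemble
    rw [← hsplit, hfeq]
    rw [hnc]
    have hnc2 : ∑ j ∈ Icc 1 ((p^(2*β+2)-1)/2), (((p*j)^2 % n : ℕ) : ℤ)
        = (p:ℤ)^2 * ∑ j ∈ Icc 1 ((p^(2*β+2)-1)/2), ((j^2 % p^(2*β+1) : ℕ) : ℤ) := by
      rw [Finset.mul_sum]
      apply Finset.sum_congr rfl
      intro j _
      rw [hmodeq j]
      push_cast
      ring
    rw [hnc2]
    have hfoldZ : (∑ j ∈ Icc 1 ((p^(2*β+2)-1)/2), ((j^2 % p^(2*β+1) : ℕ) : ℤ))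
        = (p:ℤ) * ∑ j ∈ Icc 1 ((p^(2*β+1)-1)/2), ((j^2 % p^(2*β+1) : ℕ) : ℤ) := by
      exact_mod_cast congrArg (Nat.cast : ℕ → ℤ) hfold
    rw [hfoldZ]
    -- now use hpair, hcard, ih
    have hcardZ : 2 * (((Icc 1 ((n-1)/2)).filter (fun k => n.Coprime k)).card : ℤ)
        = (p:ℤ)^(2*β+2) * ((p:ℤ) - 1) := by
      have : ((2 * ((Icc 1 ((n-1)/2)).filter (fun k => n.Coprime k)).card : ℕ) : ℤ)
          = ((p^(2*β+2) * (p-1) : ℕ) : ℤ) := by exact_mod_cast hcard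
      push_cast at this
      rw [Nat.cast_sub (by omega)] at this
      push_cast at this
      linarith [this]
    have hnZ : (n : ℤ) = (p:ℤ)^(2*β+3) := by rw [hn]; push_cast; ring
    set Sc := ∑ k ∈ (Icc 1 ((n-1)/2)).filter (fun k => n.Coprime k), ((k^2 % n : ℕ) : ℤ) with hSc
    set Sprev := ∑ j ∈ Icc 1 ((p^(2*β+1)-1)/2), ((j^2 % p^(2*β+1) : ℕ) : ℤ) with hSp
    have hpairZ : 2 * Sc = (p:ℤ)^(2*β+3) * (((Icc 1 ((n-1)/2)).filter (fun k => n.Coprime k)).card : ℤ) := by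
      rw [← hnZ]; exact hpair
    linear_combination 2*hpairZ + (p:ℤ)^(2*β+3)*hcardZ + (p:ℤ)^3*ih

theorem sum_rem_p_odd_pow (p β : ℕ) (hp : p.Prime) (h1 : p % 4 = 1) :
    (∑ k ∈ Finset.Icc 1 ((p ^ (2 * β + 1) - 1) / 2),
        ((k ^ 2 % p ^ (2 * β + 1) : ℕ) : ℚ)) =
      (1 / 4) * (p : ℚ) ^ (3 * β + 1) * ((p : ℚ) ^ (β + 1) - 1) := by
  have h := main_int p hp h1 β
  have h2 : (4:ℚ) * ∑ k ∈ Finset.Icc 1 ((p ^ (2 * β + 1) - 1) / 2),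
      ((k ^ 2 % p ^ (2 * β + 1) : ℕ) : ℚ)
      = (p:ℚ)^(3*β+1) * ((p:ℚ)^(β+1) - 1) := by
    have h2 := congrArg (fun z : ℤ => (z : ℚ)) h
    push_cast at h2
    rw [Finset.sum_congr rfl (fun x _ => by norm_cast :
      ∀ x ∈ Finset.Icc 1 ((p ^ (2*β+1) - 1) / 2),
        ((x ^ 2 % p ^ (2*β+1) : ℕ) : ℚ) = (((x:ℤ)^2 % (p:ℤ)^(2*β+1) : ℤ) : ℚ))]
    exact h2
  linarith
end
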